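/- arXiv:2204.10040 — 10 statements merged into one kernel-verified Lean document; each statement's English description precedes it below -/
import Mathlib

section
/- Let P and Q be disjoint sets of pairs of agents, let M and M1 be matchings with |M| = |M1|, let n be a positive integer and k an integer with 0 ≤ k < 3n. Define a weight function w on pairs by: w(e) = 3n for e ∈ P; w(e) = 2 − 3n for e ∈ Q∖M1; w(e) = −3n for e ∈ Q∩M1; w(e) = 0 for e ∈ M1∖(P∪Q); and w(e) = 2 for every other pair. Then Σ_{e∈M} w(e) ≤ −3n·|Q| + k if and only if P∩M = ∅, Q ⊆ M, and |M △ M1| ≤ k. -/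
open scoped symmDiff

/-- A matching: a set of pairwise disjoint unordered pairs of agents
(no diagonal pairs, and every agent is in at most one pair). -/
def IsMatching {A : Type*} [DecidableEq A] (M : Finset (Sym2 A)) : Prop :=
  (∀ e ∈ M, ¬ e.IsDiag) ∧ ∀ a b c : A, s(a, b) ∈ M → s(a, c) ∈ M → b = c

private lemma symmDiff_card_aux {A : Type*} [DecidableEq A]
    (M M1 : Finset (Sym2 A)) (h : M.card = M1.card) :
    (M ∆ M1).card = 2 * (M \ M1).card := by
  have h1 : (M ∩ M1).card + (M \ M1).card = M.card := Finset.card_inter_add_card_sdiff M M1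
  have h2 : (M1 ∩ M).card + (M1 \ M).card = M1.card := Finset.card_inter_add_card_sdiff M1 M
  rw [Finset.inter_comm] at h2
  have hd : Disjoint (M \ M1) (M1 \ M) := disjoint_sdiff_sdiff
  have he : M ∆ M1 = (M \ M1) ∪ (M1 \ M) := by rw [symmDiff_def]; rfl
  rw [he, Finset.card_union_of_disjoint hd]
  omega

/-- The counting lemma for the weight function used to reduce
adapting a stable marriage to forced pairs `Q` and forbidden pairs `P` to
computing a minimum-weight stable matching. -/
theorem stmt0 {A : Type*} [DecidableEq A]
    (P Q M M1 : Finset (Sym2 A))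
    (hPQ : Disjoint P Q)
    (hM : IsMatching M) (hM1 : IsMatching M1)
    (hcard : M.card = M1.card)
    (n : ℕ) (hn : 0 < n) (k : ℕ) (hk : k < 3 * n)
    (w : Sym2 A → ℤ)
    (hw1 : ∀ e ∈ P, w e = 3 * n)
    (hw2 : ∀ e ∈ Q, e ∉ M1 → w e = 2 - 3 * n)
    (hw3 : ∀ e ∈ Q, e ∈ M1 → w e = -(3 * n))
    (hw4 : ∀ e ∈ M1, e ∉ P → e ∉ Q → w e = 0)
    (hw5 : ∀ e, e ∉ P → e ∉ Q → e ∉ M1 → w e = 2) :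
    (∑ e ∈ M, w e) ≤ -(3 * (n : ℤ)) * Q.card + k ↔
      (P ∩ M = ∅ ∧ Q ⊆ M ∧ (M ∆ M1).card ≤ k) := by
  classical
  -- pointwise formula for w
  have hwe : ∀ e, w e = (if e ∈ P then (3 * (n : ℤ)) else 0)
      + (if e ∈ Q then -(3 * (n : ℤ)) else 0)
      + (if e ∉ P ∧ e ∉ M1 then 2 else 0) := by
    intro e
    by_cases hP : e ∈ P
    · have hQ : e ∉ Q := Finset.disjoint_left.mp hPQ hP
      simp [hP, hQ, hw1 e hP]
    · by_cases hQ : e ∈ Q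
      · by_cases h1 : e ∈ M1
        · simp [hP, hQ, h1, hw3 e hQ h1]
        · simp only [hP, hQ, h1, hw2 e hQ h1, if_true, if_false, not_false_iff, and_true,
            ite_true, ite_false]
          ring
      · by_cases h1 : e ∈ M1
        · simp [hP, hQ, h1, hw4 e h1 hP hQ]
        · simp [hP, hQ, h1, hw5 e hP hQ h1]
  have hsum : ∑ e ∈ M, w e = 3 * (n : ℤ) * (M ∩ P).card - 3 * (n : ℤ) * (M ∩ Q).card
      + 2 * ((M.filter (fun e => e ∉ P ∧ e ∉ M1)).card : ℤ) := by
    rw [Finset.sum_congr rfl (fun e _ => hwe e)]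
    rw [Finset.sum_add_distrib, Finset.sum_add_distrib]
    rw [← Finset.sum_filter, ← Finset.sum_filter, ← Finset.sum_filter]
    rw [Finset.sum_const, Finset.sum_const, Finset.sum_const]
    rw [Finset.filter_mem_eq_inter, Finset.filter_mem_eq_inter]
    push_cast
    ring
  have hq : (M ∩ Q).card + (Q \ M).card = Q.card := by
    rw [Finset.inter_comm]
    exact Finset.card_inter_add_card_sdiff Q M
  have hsd : (M ∆ M1).card = 2 * (M \ M1).card := symmDiff_card_aux M M1 hcard
  set a := (M ∩ P).card with ha
  set b := (M ∩ Q).card with hb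
  set c := (M.filter (fun e => e ∉ P ∧ e ∉ M1)).card with hc
  set q := (Q \ M).card with hqdef
  constructor
  · intro h
    rw [hsum] at h
    -- 3n*a + 3n*q + 2c ≤ k
    have key : 3 * (n : ℤ) * a + 3 * (n : ℤ) * q + 2 * c ≤ k := by
      have : (Q.card : ℤ) = (b : ℤ) + q := by exact_mod_cast hq.symm
      rw [this] at h; linarith
    have hN : (0 : ℤ) < 3 * n := by positivity
    have haq : 3 * (n : ℤ) * ((a : ℤ) + q) < 3 * (n : ℤ) * 1 := by
      have hc0 : (0 : ℤ) ≤ (c : ℤ) := Int.natCast_nonneg c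
      have hk' : (k : ℤ) < 3 * n := by exact_mod_cast hk
      nlinarith
    have haq2 : (a : ℤ) + q < 1 := lt_of_mul_lt_mul_left haq (le_of_lt hN)
    have ha0 : a = 0 := by omega
    have hq0 : q = 0 := by omega
    have hPM : P ∩ M = ∅ := by
      rw [Finset.inter_comm]
      exact Finset.card_eq_zero.mp ha0
    have hQM : Q ⊆ M := by
      have := Finset.card_eq_zero.mp hq0
      exact Finset.sdiff_eq_empty_iff_subset.mp this
    refine ⟨hPM, hQM, ?_⟩
    have hfe : M.filter (fun e => e ∉ P ∧ e ∉ M1) = M \ M1 := by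
      ext e
      simp only [Finset.mem_filter, Finset.mem_sdiff]
      constructor
      · rintro ⟨he, _, h1⟩; exact ⟨he, h1⟩
      · rintro ⟨he, h1⟩
        refine ⟨he, fun hP => ?_, h1⟩
        have : e ∈ P ∩ M := Finset.mem_inter.mpr ⟨hP, he⟩
        rw [hPM] at this
        exact absurd this (Finset.notMem_empty e)
    have hck : 2 * c ≤ k := by
      have h1 : (0:ℤ) ≤ 3 * (n:ℤ) * a := mul_nonneg (le_of_lt hN) (Int.natCast_nonneg a)
      have h2 : (0:ℤ) ≤ 3 * (n:ℤ) * q := mul_nonneg (le_of_lt hN) (Int.natCast_nonneg q)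
      have h3 : (2 : ℤ) * c ≤ k := by linarith
      exact_mod_cast h3
    rw [hsd, ← hfe]
    exact hck
  · rintro ⟨hPM, hQM, hMk⟩
    have ha0 : a = 0 := by
      rw [ha, Finset.inter_comm, hPM]; rfl
    have hq0 : q = 0 := by
      rw [hqdef, Finset.sdiff_eq_empty_iff_subset.mpr hQM]; rfl
    have hfe : M.filter (fun e => e ∉ P ∧ e ∉ M1) = M \ M1 := by
      ext e
      simp only [Finset.mem_filter, Finset.mem_sdiff]
      constructor
      · rintro ⟨he, _, h1⟩; exact ⟨he, h1⟩
      · rintro ⟨he, h1⟩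
        refine ⟨he, fun hP => ?_, h1⟩
        have : e ∈ P ∩ M := Finset.mem_inter.mpr ⟨hP, he⟩
        rw [hPM] at this
        exact absurd this (Finset.notMem_empty e)
    have hceq : 2 * c ≤ k := by
      rw [hc, hfe]; omega
    rw [hsum, ha0]
    have hQb : (Q.card : ℤ) = (b : ℤ) := by
      have : b + q = Q.card := hq
      omega
    rw [hQb]
    push_cast
    have : (2:ℤ) * c ≤ k := by exact_mod_cast hceq
    linarith
end

section
/- Let (U ∪ W, 𝒫) be a Stable Marriage with Ties instance with |U| = |W| = n in which every pair is mutually acceptable, and let N be a weakly stable matching of size n−1 leaving exactly u₀ ∈ U and w₀ ∈ W unmatched. Extend the instance by adding agents u* and w*, where the preferences of u* consist of all agents of W in some arbitrary strict order followed by w*, the preferences of w* consist of all agents of U in some arbitrary strict order followed by u*, u* is appended strictly last to the preferences of every agent of W, and w* is appended strictly last to the preferences of every agent of U. Let M1 := N ∪ {{u*, w₀}, {u₀, w*}} and let ℓ be a nonnegative integer. Then there exists a complete weakly stable matching N* of the original instance with |N △ N*| ≤ ℓ if and only if there exists a weakly stable matching M* of the extended instance with {u*, w*} ∈ M* and |M1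 △ M*| ≤ ℓ + 3. -/
section Defs

variable {U W : Type*}

/-- A matching in a bipartite (marriage) instance with acceptability `acc`:
a set of mutually acceptable man-woman pairs in which each agent occurs at most once. -/
def BMatching (acc : U → W → Prop) (M : Finset (U × W)) : Prop :=
  (∀ u w, (u, w) ∈ M → acc u w) ∧
  (∀ u w w', (u, w) ∈ M → (u, w') ∈ M → w = w') ∧
  (∀ u u' w, (u, w) ∈ M → (u', w) ∈ M → u = u')

def MatchedU (M : Finset (U × W)) (u : U) : Prop := ∃ w, (u, w) ∈ M

def MatchedW (M : Finset (U × W)) (w : W) : Prop := ∃ u, (u, w) ∈ M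

/-- A mutually acceptable pair `(u, w)` blocks `M` under weak stability:
`u` is unmatched or strictly prefers `w` to its partner (smaller rank = better),
and `w` is unmatched or strictly prefers `u` to its partner. -/
def BBlocks (acc : U → W → Prop) (rkU : U → W → ℕ) (rkW : W → U → ℕ)
    (M : Finset (U × W)) (u : U) (w : W) : Prop :=
  acc u w ∧
  (¬ MatchedU M u ∨ ∃ w', (u, w') ∈ M ∧ rkU u w < rkU u w') ∧
  (¬ MatchedW M w ∨ ∃ u', (u', w) ∈ M ∧ rkW w u < rkW w u')

/-- Weak stability: a matching not blocked by any pair. -/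
def WeaklyStable (acc : U → W → Prop) (rkU : U → W → ℕ) (rkW : W → U → ℕ)
    (M : Finset (U × W)) : Prop :=
  BMatching acc M ∧ ∀ u w, ¬ BBlocks acc rkU rkW M u w

end Defs

open scoped symmDiff

private lemma sd_card_aux {U W : Type*} [DecidableEq U] [DecidableEq W]
    (N Ns : Finset (U × W)) (u₀ : U) (w₀ : W) :
    ((N.image (fun p : U × W => ((some p.1 : Option U), (some p.2 : Option W))) ∪
        {((none : Option U), (some w₀ : Option W)), ((some u₀ : Option U), (none : Option W))}) ∆
      (Ns.image (fun p : U × W => ((some p.1 : Option U), (some p.2 : Option W))) ∪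
        {((none : Option U), (none : Option W))})).card = (N ∆ Ns).card + 3 := by
  have heq : ((N.image (fun p : U × W => ((some p.1 : Option U), (some p.2 : Option W))) ∪
        {((none : Option U), (some w₀ : Option W)), ((some u₀ : Option U), (none : Option W))}) ∆
      (Ns.image (fun p : U × W => ((some p.1 : Option U), (some p.2 : Option W))) ∪
        {((none : Option U), (none : Option W))})) =
      (N ∆ Ns).image (fun p : U × W => ((some p.1 : Option U), (some p.2 : Option W))) ∪
        {((none : Option U), (some w₀ : Option W)), ((some u₀ : Option U), (none : Option W)),
         ((none : Option U), (none : Option W))} := by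
    ext ⟨a, b⟩
    rcases a with _ | u <;> rcases b with _ | w <;>
      simp [Finset.mem_symmDiff, Prod.ext_iff]
  have hdisj : Disjoint
      ((N ∆ Ns).image (fun p : U × W => ((some p.1 : Option U), (some p.2 : Option W))))
      ({((none : Option U), (some w₀ : Option W)), ((some u₀ : Option U), (none : Option W)),
        ((none : Option U), (none : Option W))} : Finset (Option U × Option W)) := by
    simp only [Finset.disjoint_left, Finset.mem_image, Finset.mem_insert, Finset.mem_singleton]
    rintro ⟨a, b⟩ ⟨⟨u, w⟩, _, h⟩
    obtain ⟨rfl, rfl⟩ := h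
    simp
  rw [heq, Finset.card_union_of_disjoint hdisj,
    Finset.card_image_of_injective _ (by intro p q h; simpa [Prod.ext_iff] using h : Function.Injective _)]
  congr 1


/-- Correctness of the forced-pair reduction: the original instance
has a complete weakly stable matching `N*` with `|N △ N*| ≤ ℓ` iff the extended
instance has a weakly stable matching `M*` containing the forced pair `{u*, w*}`
with `|M1 △ M*| ≤ ℓ + 3`. -/
theorem stmt2 {U W : Type*} [Fintype U] [Fintype W] [DecidableEq U] [DecidableEq W]
    (n : ℕ) (hU : Fintype.card U = n) (hW : Fintype.card W = n)
    (rkU : U → W → ℕ) (rkW : W → U → ℕ)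
    (N : Finset (U × W))
    (hNstab : WeaklyStable (fun _ _ => True) rkU rkW N)
    (hNcard : N.card = n - 1)
    (u₀ : U) (w₀ : W)
    (hu₀ : ∀ u, ¬ MatchedU N u ↔ u = u₀)
    (hw₀ : ∀ w, ¬ MatchedW N w ↔ w = w₀)
    (rkU' : Option U → Option W → ℕ) (rkW' : Option W → Option U → ℕ)
    (hrkU'1 : ∀ u w, rkU' (some u) (some w) = rkU u w)
    (hrkU'2 : ∀ u w, rkU u w < rkU' (some u) none)
    (hrkU'3 : Function.Injective (fun w : W => rkU' none (some w)))
    (hrkU'4 : ∀ w, rkU' none (some w) < rkU' none none)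
    (hrkW'1 : ∀ w u, rkW' (some w) (some u) = rkW w u)
    (hrkW'2 : ∀ w u, rkW w u < rkW' (some w) none)
    (hrkW'3 : Function.Injective (fun u : U => rkW' none (some u)))
    (hrkW'4 : ∀ u, rkW' none (some u) < rkW' none none)
    (M1 : Finset (Option U × Option W))
    (hM1 : M1 = N.image (fun p => (some p.1, some p.2)) ∪
        {((none : Option U), (some w₀ : Option W)), ((some u₀ : Option U), (none : Option W))})
    (ℓ : ℕ) :
    (∃ Nstar : Finset (U × W),
        WeaklyStable (fun _ _ => True) rkU rkW Nstar ∧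
        (∀ u, MatchedU Nstar u) ∧ (∀ w, MatchedW Nstar w) ∧
        (N ∆ Nstar).card ≤ ℓ) ↔
      (∃ Mstar : Finset (Option U × Option W),
        WeaklyStable (fun _ _ => True) rkU' rkW' Mstar ∧
        ((none : Option U), (none : Option W)) ∈ Mstar ∧
        (M1 ∆ Mstar).card ≤ ℓ + 3) := by
  subst hM1
  constructor
  · rintro ⟨Ns, ⟨⟨-, hNs2, hNs3⟩, hNsb⟩, hcU, hcW, hcard⟩
    set Ms : Finset (Option U × Option W) :=
      Ns.image (fun p : U × W => ((some p.1 : Option U), (some p.2 : Option W))) ∪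
        {((none : Option U), (none : Option W))} with hMsdef
    have hmem : ∀ x y, (x, y) ∈ Ms ↔
        (∃ u w, (u, w) ∈ Ns ∧ x = some u ∧ y = some w) ∨ (x = none ∧ y = none) := by
      intro x y
      simp only [hMsdef, Finset.mem_union, Finset.mem_image, Finset.mem_singleton, Prod.ext_iff]
      constructor
      · rintro (⟨⟨u, w⟩, huw, h1, h2⟩ | ⟨h1, h2⟩)
        · exact Or.inl ⟨u, w, huw, h1.symm, h2.symm⟩
        · exact Or.inr ⟨h1, h2⟩
      · rintro (⟨u, w, huw, rfl, rfl⟩ | ⟨rfl, rfl⟩)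
        · exact Or.inl ⟨⟨u, w⟩, huw, rfl, rfl⟩
        · exact Or.inr ⟨rfl, rfl⟩
    refine ⟨Ms, ⟨⟨fun _ _ _ => trivial, ?_, ?_⟩, ?_⟩,
      (hmem none none).mpr (Or.inr ⟨rfl, rfl⟩), ?_⟩
    · -- u-side uniqueness
      intro a b b' hab hab'
      rcases (hmem a b).mp hab with ⟨u, w, huw, rfl, rfl⟩ | ⟨rfl, rfl⟩ <;>
        rcases (hmem _ b').mp hab' with ⟨u', w', huw', h1, rfl⟩ | ⟨h1, rfl⟩
      · have h : u' = u := by simpa using h1.symm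
        exact congrArg some (hNs2 u w w' huw (h ▸ huw'))
      · simp at h1
      · simp at h1
      · rfl
    · -- w-side uniqueness
      intro a a' b hab hab'
      rcases (hmem a b).mp hab with ⟨u, w, huw, rfl, rfl⟩ | ⟨rfl, rfl⟩ <;>
        rcases (hmem a' _).mp hab' with ⟨u', w', huw', rfl, h2⟩ | ⟨rfl, h2⟩
      · have h : w' = w := by simpa using h2.symm
        exact congrArg some (hNs3 u u' w huw (h ▸ huw'))
      · simp at h2
      · simp at h2
      · rfl
    · -- stability
      rintro a b ⟨-, hbu, hbw⟩
      rcases a with _ | u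
      · rcases b with _ | w
        · -- (u*, w*): u* matched to w* and prefers nothing over it
          rcases hbu with hun | ⟨w', hw', hlt⟩
          · exact hun ⟨none, (hmem none none).mpr (Or.inr ⟨rfl, rfl⟩)⟩
          · rcases (hmem none w').mp hw' with ⟨u, w, -, h, -⟩ | ⟨-, rfl⟩
            · exact absurd h (by simp)
            · exact absurd hlt (lt_irrefl _)
        · -- (u*, w): w is matched to a real man, preferred to u*
          rcases hbw with hwn | ⟨u', hu', hlt⟩
          · obtain ⟨u₁, hu₁⟩ := hcW w
            exact hwn ⟨some u₁, (hmem _ _).mpr (Or.inl ⟨u₁, w, hu₁, rfl, rfl⟩)⟩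
          · rcases (hmem u' (some w)).mp hu' with ⟨u₂, w₂, -, rfl, hy⟩ | ⟨-, h⟩
            · rw [hrkW'1] at hlt
              exact absurd hlt (not_lt_of_gt (hrkW'2 w u₂))
            · exact absurd h (by simp)
      · rcases b with _ | w
        · -- (u, w*): u is matched to a real woman, preferred to w*
          rcases hbu with hun | ⟨w', hw', hlt⟩
          · obtain ⟨w₁, hw₁⟩ := hcU u
            exact hun ⟨some w₁, (hmem _ _).mpr (Or.inl ⟨u, w₁, hw₁, rfl, rfl⟩)⟩
          · rcases (hmem (some u) w').mp hw' with ⟨u₂, w₂, -, hx, rfl⟩ | ⟨h, -⟩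
            · rw [hrkU'1] at hlt
              exact absurd hlt (not_lt_of_gt (hrkU'2 u w₂))
            · exact absurd h (by simp)
        · -- both real: lift to a blocking pair of Ns
          rcases hbu with hun | ⟨w', hw', hltu⟩
          · obtain ⟨w₁, hw₁⟩ := hcU u
            exact hun ⟨some w₁, (hmem _ _).mpr (Or.inl ⟨u, w₁, hw₁, rfl, rfl⟩)⟩
          · rcases hbw with hwn | ⟨u', hu', hltw⟩
            · obtain ⟨u₁, hu₁⟩ := hcW w
              exact hwn ⟨some u₁, (hmem _ _).mpr (Or.inl ⟨u₁, w, hu₁, rfl, rfl⟩)⟩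
            · rcases (hmem (some u) w').mp hw' with ⟨u₂, w₂, hm, hx, rfl⟩ | ⟨h, -⟩
              · rcases (hmem u' (some w)).mp hu' with ⟨u₃, w₃, hm', rfl, hy⟩ | ⟨-, h⟩
                · have hx' : u₂ = u := by simpa using hx.symm
                  have hy' : w₃ = w := by simpa using hy.symm
                  refine hNsb u w ⟨trivial, Or.inr ⟨w₂, hx' ▸ hm, ?_⟩,
                    Or.inr ⟨u₃, hy' ▸ hm', ?_⟩⟩
                  · rw [hrkU'1, hrkU'1] at hltu; exact hltu
                  · rw [hrkW'1, hrkW'1] at hltw; exact hltw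
                · exact absurd h (by simp)
              · exact absurd h (by simp)
    · -- cardinality
      rw [hMsdef, sd_card_aux]
      omega
  · rintro ⟨Ms, ⟨⟨-, hMs2, hMs3⟩, hMsb⟩, hnn, hcard⟩
    set Ns : Finset (U × W) :=
      Finset.univ.filter (fun p : U × W => ((some p.1 : Option U), (some p.2 : Option W)) ∈ Ms)
      with hNsdef
    have hmemNs : ∀ u w, (u, w) ∈ Ns ↔ ((some u : Option U), (some w : Option W)) ∈ Ms := by
      intro u w; simp [hNsdef]
    -- no pair (some u, none) or (none, some w) in Ms
    have hno1 : ∀ u : U, ((some u : Option U), (none : Option W)) ∉ Ms := by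
      intro u h
      have := hMs3 (some u) none none h hnn
      simp at this
    have hno2 : ∀ w : W, ((none : Option U), (some w : Option W)) ∉ Ms := by
      intro w h
      have := hMs2 none (some w) none h hnn
      simp at this
    -- every u is matched in Ns
    have hcU : ∀ u : U, MatchedU Ns u := by
      intro u
      by_contra hun
      have hunM : ¬ MatchedU Ms (some u) := by
        rintro ⟨w, hw⟩
        rcases w with _ | w
        · exact hno1 u hw
        · exact hun ⟨w, (hmemNs u w).mpr hw⟩
      exact hMsb (some u) none ⟨trivial, Or.inl hunM,
        Or.inr ⟨none, hnn, hrkW'4 u⟩⟩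
    have hcW : ∀ w : W, MatchedW Ns w := by
      intro w
      by_contra hwn
      have hwnM : ¬ MatchedW Ms (some w) := by
        rintro ⟨u, hu⟩
        rcases u with _ | u
        · exact hno2 w hu
        · exact hwn ⟨u, (hmemNs u w).mpr hu⟩
      exact hMsb none (some w) ⟨trivial, Or.inr ⟨none, hnn, hrkU'4 w⟩, Or.inl hwnM⟩
    -- Ms equals the image of Ns plus (none, none)
    have hMseq : Ms = Ns.image (fun p : U × W => ((some p.1 : Option U), (some p.2 : Option W))) ∪
        {((none : Option U), (none : Option W))} := by
      ext ⟨a, b⟩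
      simp only [Finset.mem_union, Finset.mem_image, Finset.mem_singleton, Prod.ext_iff]
      constructor
      · intro hab
        rcases a with _ | u <;> rcases b with _ | w
        · exact Or.inr ⟨rfl, rfl⟩
        · exact absurd hab (hno2 w)
        · exact absurd hab (hno1 u)
        · exact Or.inl ⟨⟨u, w⟩, (hmemNs u w).mpr hab, rfl, rfl⟩
      · rintro (⟨⟨u, w⟩, huw, rfl, rfl⟩ | ⟨rfl, rfl⟩)
        · exact (hmemNs u w).mp huw
        · exact hnn
    refine ⟨Ns, ⟨⟨fun _ _ _ => trivial, ?_, ?_⟩, ?_⟩, hcU, hcW, ?_⟩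
    · intro u w w' h h'
      have := hMs2 (some u) (some w) (some w') ((hmemNs u w).mp h) ((hmemNs u w').mp h')
      simpa using this
    · intro u u' w h h'
      have := hMs3 (some u) (some u') (some w) ((hmemNs u w).mp h) ((hmemNs u' w).mp h')
      simpa using this
    · rintro u w ⟨-, hbu, hbw⟩
      obtain ⟨w₁, hw₁⟩ := hcU u
      obtain ⟨u₁, hu₁⟩ := hcW w
      rcases hbu with hun | ⟨w', hw', hltu⟩
      · exact hun ⟨w₁, hw₁⟩
      · rcases hbw with hwn | ⟨u', hu', hltw⟩
        · exact hwn ⟨u₁, hu₁⟩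
        · refine hMsb (some u) (some w) ⟨trivial,
            Or.inr ⟨some w', (hmemNs u w').mp hw', ?_⟩,
            Or.inr ⟨some u', (hmemNs u' w).mp hu', ?_⟩⟩
          · rw [hrkU'1, hrkU'1]; exact hltu
          · rw [hrkW'1, hrkW'1]; exact hltw
    · rw [hMseq, sd_card_aux] at hcard
      omega
end

section
/- Let G be a finite simple graph. Construct a Stable Roommates instance with agents a₁ᵛ, …, a₅ᵛ, b₁ᵛ, …, b₅ᵛ for each vertex v of G, with preferences, for each v ∈ V(G): a₁ᵛ: b₁ᵛ ≻ b₂ᵛ; a₂ᵛ: b₃ᵛ ≻ b₂ᵛ ≻ [N*(v)] ≻ b₁ᵛ, where [N*(v)] is a fixed arbitrary strict order of {a₂ʷ : w a neighbor of v in G}; a₃ᵛ: b₂ᵛ ≻ b₃ᵛ; a₄ᵛ: b₅ᵛ ≻ b₃ᵛ ≻ b₄ᵛ; a₅ᵛ: b₄ᵛ ≻ b₅ᵛ; b₁ᵛ: a₂ᵛ ≻ a₁ᵛ; b₂ᵛ: a₁ᵛ ≻ a₂ᵛ ≻ a₃ᵛ; b₃ᵛ: a₃ᵛ ≻ a₄ᵛ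 ≻ a₂ᵛ; b₄ᵛ: a₄ᵛ ≻ a₅ᵛ; b₅ᵛ: a₅ᵛ ≻ a₄ᵛ (acceptability being symmetric and exactly as listed). Then the matching M1 := {{aᵢᵛ, bᵢᵛ} : i ∈ {1,…,5}, v ∈ V(G)} is a stable matching of this instance. -/
section SRDefs

variable {A : Type*}

/-- A matching in a Stable Roommates instance with acceptability `acc`:
a set of unordered pairs of mutually acceptable agents, each agent in at most one pair. -/
def IsSRMatching (acc : A → A → Prop) (M : Finset (Sym2 A)) : Prop :=
  (∀ a b : A, s(a, b) ∈ M → acc a b) ∧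
  (∀ a b c : A, s(a, b) ∈ M → s(a, c) ∈ M → b = c)

def Matched (M : Finset (Sym2 A)) (a : A) : Prop := ∃ b, s(a, b) ∈ M

/-- A pair `{a, b}` of acceptable agents blocks `M`: each of the two agents is
unmatched or strictly prefers the other to its partner (smaller rank = better). -/
def SRBlocks (acc : A → A → Prop) (rk : A → A → ℕ) (M : Finset (Sym2 A)) (a b : A) : Prop :=
  acc a b ∧
  (¬ Matched M a ∨ ∃ c, s(a, c) ∈ M ∧ rk a b < rk a c) ∧
  (¬ Matched M b ∨ ∃ c, s(b, c) ∈ M ∧ rk b a < rk b c)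

/-- A stable matching: a matching not blocked by any pair. -/
def IsStable (acc : A → A → Prop) (rk : A → A → ℕ) (M : Finset (Sym2 A)) : Prop :=
  IsSRMatching acc M ∧ ∀ a b, ¬ SRBlocks acc rk M a b

end SRDefs

section Construction

variable {V : Type*}

/-- The agents of the reduction: `(false, i, v)` is `a_{i+1}^v` and `(true, i, v)` is `b_{i+1}^v`. -/
abbrev Ag (V : Type*) := Bool × Fin 5 × V

def aA (i : Fin 5) (v : V) : Ag V := (false, i, v)

def bA (i : Fin 5) (v : V) : Ag V := (true, i, v)

/-- The (one-sided) list of acceptable partners, following the preference lists. -/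
def srAccP (G : SimpleGraph V) : Ag V → Ag V → Prop := fun x y =>
  (∃ v, x = aA 0 v ∧ (y = bA 0 v ∨ y = bA 1 v)) ∨
  (∃ v, x = aA 1 v ∧ (y = bA 2 v ∨ y = bA 1 v ∨ y = bA 0 v)) ∨
  (∃ v w, x = aA 1 v ∧ G.Adj v w ∧ y = aA 1 w) ∨
  (∃ v, x = aA 2 v ∧ (y = bA 1 v ∨ y = bA 2 v)) ∨
  (∃ v, x = aA 3 v ∧ (y = bA 4 v ∨ y = bA 2 v ∨ y = bA 3 v)) ∨
  (∃ v, x = aA 4 v ∧ (y = bA 3 v ∨ y = bA 4 v))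

/-- Symmetric acceptability relation of the constructed instance. -/
def srAcc (G : SimpleGraph V) (x y : Ag V) : Prop := srAccP G x y ∨ srAccP G y x

/-- Rank of `b_{j+1}^v` in the preferences of `a_{i+1}^v` (`99` = unacceptable junk value):
`a₁ᵛ: b₁ᵛ ≻ b₂ᵛ`; `a₂ᵛ: b₃ᵛ ≻ b₂ᵛ ≻ [N*(v)] ≻ b₁ᵛ` (the neighbors get ranks `2 + ord`,
and `b₁ᵛ` gets rank `2 + nV`); `a₃ᵛ: b₂ᵛ ≻ b₃ᵛ`; `a₄ᵛ: b₅ᵛ ≻ b₃ᵛ ≻ b₄ᵛ`; `a₅ᵛ: b₄ᵛ ≻ b₅ᵛ`. -/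
def rkAB (nV : ℕ) : Fin 5 → Fin 5 → ℕ :=
  ![![0, 1, 99, 99, 99],
    ![2 + nV, 1, 0, 99, 99],
    ![99, 0, 1, 99, 99],
    ![99, 99, 1, 2, 0],
    ![99, 99, 99, 0, 1]]

/-- Rank of `a_{j+1}^v` in the preferences of `b_{i+1}^v`:
`b₁ᵛ: a₂ᵛ ≻ a₁ᵛ`; `b₂ᵛ: a₁ᵛ ≻ a₂ᵛ ≻ a₃ᵛ`; `b₃ᵛ: a₃ᵛ ≻ a₄ᵛ ≻ a₂ᵛ`;
`b₄ᵛ: a₄ᵛ ≻ a₅ᵛ`; `b₅ᵛ: a₅ᵛ ≻ a₄ᵛ`. -/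
def rkBA : Fin 5 → Fin 5 → ℕ :=
  ![![1, 0, 99, 99, 99],
    ![0, 1, 2, 99, 99],
    ![99, 2, 0, 1, 99],
    ![99, 99, 99, 0, 1],
    ![99, 99, 99, 1, 0]]

/-- The rank function of the constructed instance; `ord v w` encodes the fixed
arbitrary strict order `[N*(v)]` of the neighbors of `v`. -/
def srRk [DecidableEq V] (ord : V → V → ℕ) (nV : ℕ) : Ag V → Ag V → ℕ
  | (false, i, v), (true, j, w) => if v = w then rkAB nV i j else 99
  | (false, _, v), (false, _, w) => 2 + ord v w
  | (true, i, v), (false, j, w) => if v = w then rkBA i j else 99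
  | (true, _, _), (true, _, _) => 99

/-- The initial matching `M1 = {{aᵢᵛ, bᵢᵛ} : i ∈ [5], v ∈ V}`. -/
def M1SR (V : Type*) [Fintype V] [DecidableEq V] : Finset (Sym2 (Ag V)) :=
  Finset.univ.image (fun p : Fin 5 × V => s(aA p.1 p.2, bA p.1 p.2))

/-- The forbidden pairs `P = {{a₂ᵛ, b₂ᵛ} : v ∈ V}`. -/
def PSR (V : Type*) [Fintype V] [DecidableEq V] : Finset (Sym2 (Ag V)) :=
  Finset.univ.image (fun v : V => s(aA 1 v, bA 1 v))

end Construction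


section Helpers

variable {V : Type*} [Fintype V] [DecidableEq V]

lemma mem_M1 (i : Fin 5) (v : V) : s(aA i v, bA i v) ∈ M1SR V := by
  simp only [M1SR, Finset.mem_image]
  exact ⟨(i, v), Finset.mem_univ _, rfl⟩

lemma matched_all (x : Ag V) : Matched (M1SR V) x := by
  obtain ⟨b, i, v⟩ := x
  cases b
  · exact ⟨bA i v, mem_M1 i v⟩
  · exact ⟨aA i v, Sym2.eq_swap ▸ mem_M1 i v⟩

lemma partner_a {i : Fin 5} {v : V} {c : Ag V} (h : s(aA i v, c) ∈ M1SR V) :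
    c = bA i v := by
  simp only [M1SR, Finset.mem_image, Finset.mem_univ, true_and] at h
  obtain ⟨⟨j, w⟩, hEq⟩ := h
  rw [Sym2.eq_iff] at hEq
  rcases hEq with ⟨h1, h2⟩ | ⟨h1, h2⟩
  · obtain ⟨-, h3, h4⟩ := Prod.mk.injEq .. ▸ h1
    simp_all [aA, bA]
  · simp [aA, bA] at h2

lemma partner_b {i : Fin 5} {v : V} {c : Ag V} (h : s(bA i v, c) ∈ M1SR V) :
    c = aA i v := by
  simp only [M1SR, Finset.mem_image, Finset.mem_univ, true_and] at h
  obtain ⟨⟨j, w⟩, hEq⟩ := h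
  rw [Sym2.eq_iff] at hEq
  rcases hEq with ⟨h1, h2⟩ | ⟨h1, h2⟩
  · simp [aA, bA] at h1
  · simp_all [aA, bA]

lemma rk_ab (ord : V → V → ℕ) (nV : ℕ) (i j : Fin 5) (v : V) :
    srRk ord nV (aA i v) (bA j v) = rkAB nV i j := by
  simp [srRk, aA, bA]

lemma rk_ba (ord : V → V → ℕ) (nV : ℕ) (i j : Fin 5) (v : V) :
    srRk ord nV (bA i v) (aA j v) = rkBA i j := by
  simp [srRk, aA, bA]

lemma rk_aa (ord : V → V → ℕ) (nV : ℕ) (i j : Fin 5) (v w : V) :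
    srRk ord nV (aA i v) (aA j w) = 2 + ord v w := by
  simp [srRk, aA]

end Helpers

/-- The matching `M1` is stable in the instance constructed
from the graph `G` (with `[N*(v)]` encoded by any `ord` that is injective on
neighbors and bounded by `|V|`). -/
theorem stmt4 {V : Type*} [Fintype V] [DecidableEq V] (G : SimpleGraph V)
    (ord : V → V → ℕ)
    (hordInj : ∀ v w w', G.Adj v w → G.Adj v w' → ord v w = ord v w' → w = w')
    (hordLt : ∀ v w, G.Adj v w → ord v w < Fintype.card V) :
    IsStable (srAcc G) (srRk ord (Fintype.card V)) (M1SR V) := by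
  classical
  set nV := Fintype.card V
  constructor
  · constructor
    · intro a b hab
      simp only [M1SR, Finset.mem_image, Finset.mem_univ, true_and] at hab
      obtain ⟨⟨i, v⟩, hEq⟩ := hab
      rw [Sym2.eq_iff] at hEq
      have key : ∀ i : Fin 5, ∀ v : V, srAcc G (aA i v) (bA i v) := by
        intro i v
        left
        fin_cases i
        · exact Or.inl ⟨v, rfl, Or.inl rfl⟩
        · exact Or.inr (Or.inl ⟨v, rfl, Or.inr (Or.inl rfl)⟩)
        · exact Or.inr (Or.inr (Or.inr (Or.inl ⟨v, rfl, Or.inr rfl⟩)))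
        · exact Or.inr (Or.inr (Or.inr (Or.inr (Or.inl ⟨v, rfl, Or.inr (Or.inr rfl)⟩))))
        · exact Or.inr (Or.inr (Or.inr (Or.inr (Or.inr ⟨v, rfl, Or.inr rfl⟩))))
      rcases hEq with ⟨h1, h2⟩ | ⟨h1, h2⟩
      · subst h1; subst h2; exact key i v
      · subst h1; subst h2
        exact Or.symm (key i v)
    · intro a b c hb hc
      obtain ⟨bo, i, v⟩ := a
      cases bo
      · rw [partner_a hb, partner_a hc]
      · rw [partner_b hb, partner_b hc]
  · intro a b hblk
    obtain ⟨hacc, ha, hb⟩ := hblk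
    have ha' := ha.resolve_left (not_not_intro (matched_all a))
    have hb' := hb.resolve_left (not_not_intro (matched_all b))
    clear ha hb
    have key : ∀ a b : Ag V, srAccP G a b →
        (∃ c, s(a, c) ∈ M1SR V ∧ srRk ord nV a b < srRk ord nV a c) →
        (∃ c, s(b, c) ∈ M1SR V ∧ srRk ord nV b a < srRk ord nV b c) → False := by
      clear ha' hb' hacc a b
      intro a b hP ha hb
      obtain ⟨c, hc, hlt⟩ := ha
      obtain ⟨d, hd, hlt'⟩ := hb
      rcases hP with ⟨v, rfl, hy⟩ | ⟨v, rfl, hy⟩ | ⟨v, w, rfl, hadj, rfl⟩ |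
        ⟨v, rfl, hy⟩ | ⟨v, rfl, hy⟩ | ⟨v, rfl, hy⟩
      · rw [partner_a hc] at hlt
        rcases hy with rfl | rfl <;>
          simp [rk_ab, rkAB] at hlt
      · rw [partner_a hc] at hlt
        rcases hy with rfl | rfl | rfl
        · rw [partner_b hd] at hlt'
          simp [rk_ba, rkBA] at hlt'
        · simp [rk_ab, rkAB] at hlt
        · simp [rk_ab, rkAB] at hlt
      · rw [partner_a hc] at hlt
        rw [rk_aa, rk_ab] at hlt
        simp [rkAB] at hlt
      · rw [partner_a hc] at hlt
        rcases hy with rfl | rfl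
        · rw [partner_b hd] at hlt'
          simp [rk_ba, rkBA] at hlt'
        · simp [rk_ab, rkAB] at hlt
      · rw [partner_a hc] at hlt
        rcases hy with rfl | rfl | rfl
        · rw [partner_b hd] at hlt'
          simp [rk_ba, rkBA] at hlt'
        · rw [partner_b hd] at hlt'
          simp [rk_ba, rkBA] at hlt'
        · simp [rk_ab, rkAB] at hlt
      · rw [partner_a hc] at hlt
        rcases hy with rfl | rfl
        · rw [partner_b hd] at hlt'
          simp [rk_ba, rkBA] at hlt'
        · simp [rk_ab, rkAB] at hlt
    rcases hacc with h | h
    · exact key a b h ha' hb'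
    · exact key b a h hb' ha'
end

section
/- Let G be a finite simple graph and construct the Stable Roommates instance with agents a₁ᵛ, …, a₅ᵛ, b₁ᵛ, …, b₅ᵛ for each v ∈ V(G) and preferences a₁ᵛ: b₁ᵛ ≻ b₂ᵛ; a₂ᵛ: b₃ᵛ ≻ b₂ᵛ ≻ [N*(v)] ≻ b₁ᵛ (where [N*(v)] is a fixed arbitrary strict order of {a₂ʷ : w a neighbor of v in G}); a₃ᵛ: b₂ᵛ ≻ b₃ᵛ; a₄ᵛ: b₅ᵛ ≻ b₃ᵛ ≻ b₄ᵛ; a₅ᵛ: b₄ᵛ ≻ b₅ᵛ; b₁ᵛ: a₂ᵛ ≻ a₁ᵛ; b₂ᵛ: a₁ᵛ ≻ a₂ᵛ ≻ a₃ᵛ; b₃ᵛ: a₃ᵛ ≻ a₄ᵛ ≻ a₂ᵛ; b₄ᵛ: a₄ᵛ ≻ a₅ᵛ; b₅ᵛ: a₅ᵛ ≻ a₄ᵛ. Let M1 := {{aᵢᵛ, bᵢᵛ} : i ∈ {1,…,5}, v ∈ V(G)} and P := {{a₂ᵛ, b₂ᵛ} : v ∈ V(G)}. If X is an independent set of G of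 size ℓ, then the matching M* := ⋃_{v∈X} {{a₁ᵛ,b₂ᵛ},{a₂ᵛ,b₁ᵛ},{a₃ᵛ,b₃ᵛ},{a₄ᵛ,b₄ᵛ},{a₅ᵛ,b₅ᵛ}} ∪ ⋃_{v∈V(G)∖X} {{a₁ᵛ,b₁ᵛ},{a₂ᵛ,b₃ᵛ},{a₃ᵛ,b₂ᵛ},{a₄ᵛ,b₅ᵛ},{a₅ᵛ,b₄ᵛ}} is a stable matching with M* ∩ P = ∅ and |M* △ M1| = 8|V(G)| − 4ℓ. -/
open scoped symmDiff

/-- The matching `M*` built from an independent set `X`: for `v ∈ X` take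
`{a₁ᵛ,b₂ᵛ},{a₂ᵛ,b₁ᵛ},{a₃ᵛ,b₃ᵛ},{a₄ᵛ,b₄ᵛ},{a₅ᵛ,b₅ᵛ}` (the matching `Mᵛ`), and for
`v ∉ X` take `{a₁ᵛ,b₁ᵛ},{a₂ᵛ,b₃ᵛ},{a₃ᵛ,b₂ᵛ},{a₄ᵛ,b₅ᵛ},{a₅ᵛ,b₄ᵛ}` (the matching `M̄ᵛ`). -/
def MstarSR {V : Type*} [Fintype V] [DecidableEq V] (X : Finset V) : Finset (Sym2 (Ag V)) :=
  Finset.univ.biUnion (fun v : V =>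
    if v ∈ X then
      {s(aA 0 v, bA 1 v), s(aA 1 v, bA 0 v), s(aA 2 v, bA 2 v),
       s(aA 3 v, bA 3 v), s(aA 4 v, bA 4 v)}
    else
      {s(aA 0 v, bA 0 v), s(aA 1 v, bA 2 v), s(aA 2 v, bA 1 v),
       s(aA 3 v, bA 4 v), s(aA 4 v, bA 3 v)})

namespace Stmt5Aux
set_option linter.unusedSectionVars false

open Finset

variable {V : Type*} [Fintype V] [DecidableEq V]

/-- The permutation of indices used by `M*` in gadget `v`. -/
def sig (X : Finset V) (v : V) (i : Fin 5) : Fin 5 :=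
  if v ∈ X then ![1, 0, 2, 3, 4] i else ![0, 2, 1, 4, 3] i

lemma sig_invol (X : Finset V) (v : V) (i : Fin 5) : sig X v (sig X v i) = i := by
  unfold sig
  by_cases h : v ∈ X <;> simp only [h, if_true, if_false] <;> fin_cases i <;> rfl

/-- The partner function of `M*`. -/
def ptn (X : Finset V) (x : Ag V) : Ag V := (!x.1, sig X x.2.2 x.2.1, x.2.2)

lemma ptn_a (X : Finset V) (i : Fin 5) (v : V) :
    ptn X (aA i v) = bA (sig X v i) v := rfl

lemma ptn_b (X : Finset V) (i : Fin 5) (v : V) :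
    ptn X (bA i v) = aA (sig X v i) v := rfl

def fM (X : Finset V) (p : Fin 5 × V) : Sym2 (Ag V) :=
  s(aA p.1 p.2, bA (sig X p.2 p.1) p.2)

lemma Mstar_eq (X : Finset V) : MstarSR X = Finset.univ.image (fM X) := by
  ext e
  simp only [MstarSR, Finset.mem_biUnion, Finset.mem_univ, true_and, Finset.mem_image,
    Prod.exists]
  constructor
  · rintro ⟨v, hv⟩
    by_cases h : v ∈ X
    · rw [if_pos h] at hv
      simp only [Finset.mem_insert, Finset.mem_singleton] at hv
      rcases hv with rfl | rfl | rfl | rfl | rfl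
      · exact ⟨0, v, by simp [fM, sig, h]⟩
      · exact ⟨1, v, by simp [fM, sig, h]⟩
      · exact ⟨2, v, by simp [fM, sig, h]⟩
      · exact ⟨3, v, by simp [fM, sig, h]⟩
      · exact ⟨4, v, by simp [fM, sig, h]⟩
    · rw [if_neg h] at hv
      simp only [Finset.mem_insert, Finset.mem_singleton] at hv
      rcases hv with rfl | rfl | rfl | rfl | rfl
      · exact ⟨0, v, by simp [fM, sig, h]⟩
      · exact ⟨1, v, by simp [fM, sig, h]⟩
      · exact ⟨2, v, by simp [fM, sig, h]⟩
      · exact ⟨3, v, by simp [fM, sig, h]⟩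
      · exact ⟨4, v, by simp [fM, sig, h]⟩
  · rintro ⟨i, v, rfl⟩
    refine ⟨v, ?_⟩
    by_cases h : v ∈ X
    · rw [if_pos h]
      fin_cases i <;> simp [fM, sig, h]
    · rw [if_neg h]
      fin_cases i <;> simp [fM, sig, h]

lemma mem_Mstar (X : Finset V) (x y : Ag V) :
    s(x, y) ∈ MstarSR X ↔ y = ptn X x := by
  rw [Mstar_eq]
  simp only [Finset.mem_image, Finset.mem_univ, true_and, Prod.exists]
  constructor
  · rintro ⟨i, v, h⟩
    rw [fM, Sym2.eq_iff] at h
    rcases h with ⟨rfl, rfl⟩ | ⟨rfl, rfl⟩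
    · rfl
    · rw [ptn_b, sig_invol]
  · rintro rfl
    obtain ⟨c, i, v⟩ := x
    cases c
    · exact ⟨i, v, rfl⟩
    · refine ⟨sig X v i, v, ?_⟩
      rw [fM]
      show s(aA (sig X v i) v, bA (sig X v (sig X v i)) v) = _
      rw [sig_invol]
      exact Sym2.eq_swap

lemma rk_ptn_b (ord : V → V → ℕ) (nV : ℕ) {X : Finset V} {v : V} (h : v ∈ X) (j : Fin 5) :
    srRk ord nV (bA j v) (ptn X (bA j v)) = 0 := by
  rw [ptn_b]
  show srRk ord nV (true, j, v) (false, sig X v j, v) = 0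
  fin_cases j <;> simp [srRk, sig, h, rkBA]

lemma rk_ptn_a (ord : V → V → ℕ) (nV : ℕ) {X : Finset V} {v : V} (h : v ∉ X) (i : Fin 5) :
    srRk ord nV (aA i v) (ptn X (aA i v)) = 0 := by
  rw [ptn_a]
  show srRk ord nV (false, i, v) (true, sig X v i, v) = 0
  fin_cases i <;> simp [srRk, sig, h, rkAB]

lemma accP_pair (G : SimpleGraph V) (X : Finset V) (v : V) (i : Fin 5) :
    srAccP G (aA i v) (bA (sig X v i) v) := by
  by_cases h : v ∈ X <;> unfold sig <;> simp only [h, if_true, if_false] <;> fin_cases i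
  · exact Or.inl ⟨v, rfl, Or.inr rfl⟩
  · exact Or.inr (Or.inl ⟨v, rfl, Or.inr (Or.inr rfl)⟩)
  · exact Or.inr (Or.inr (Or.inr (Or.inl ⟨v, rfl, Or.inr rfl⟩)))
  · exact Or.inr (Or.inr (Or.inr (Or.inr (Or.inl ⟨v, rfl, Or.inr (Or.inr rfl)⟩))))
  · exact Or.inr (Or.inr (Or.inr (Or.inr (Or.inr ⟨v, rfl, Or.inr rfl⟩))))
  · exact Or.inl ⟨v, rfl, Or.inl rfl⟩
  · exact Or.inr (Or.inl ⟨v, rfl, Or.inl rfl⟩)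
  · exact Or.inr (Or.inr (Or.inr (Or.inl ⟨v, rfl, Or.inl rfl⟩)))
  · exact Or.inr (Or.inr (Or.inr (Or.inr (Or.inl ⟨v, rfl, Or.inl rfl⟩))))
  · exact Or.inr (Or.inr (Or.inr (Or.inr (Or.inr ⟨v, rfl, Or.inl rfl⟩))))

lemma ab_case (ord : V → V → ℕ) (nV : ℕ) (X : Finset V) (i j : Fin 5) (v : V)
    (hxy : srRk ord nV (aA i v) (bA j v) < srRk ord nV (aA i v) (ptn X (aA i v)))
    (hyx : srRk ord nV (bA j v) (aA i v) < srRk ord nV (bA j v) (ptn X (bA j v))) : False := by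
  by_cases h : v ∈ X
  · rw [rk_ptn_b ord nV h] at hyx; exact Nat.not_lt_zero _ hyx
  · rw [rk_ptn_a ord nV h] at hxy; exact Nat.not_lt_zero _ hxy

lemma no_block (G : SimpleGraph V) (ord : V → V → ℕ) (nV : ℕ) (X : Finset V)
    (hX : ∀ v ∈ X, ∀ w ∈ X, ¬ G.Adj v w) (x y : Ag V) (hacc : srAccP G x y)
    (hxy : srRk ord nV x y < srRk ord nV x (ptn X x))
    (hyx : srRk ord nV y x < srRk ord nV y (ptn X y)) : False := by
  rcases hacc with ⟨v, rfl, rfl | rfl⟩ | ⟨v, rfl, rfl | rfl | rfl⟩ |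
    ⟨v, w, rfl, hadj, rfl⟩ | ⟨v, rfl, rfl | rfl⟩ | ⟨v, rfl, rfl | rfl | rfl⟩ |
    ⟨v, rfl, rfl | rfl⟩
  · exact ab_case ord nV X _ _ _ hxy hyx
  · exact ab_case ord nV X _ _ _ hxy hyx
  · exact ab_case ord nV X _ _ _ hxy hyx
  · exact ab_case ord nV X _ _ _ hxy hyx
  · exact ab_case ord nV X _ _ _ hxy hyx
  · -- cross pair a₂ᵛ – a₂ʷ
    by_cases hv : v ∈ X
    · by_cases hw : w ∈ X
      · exact hX v hv w hw hadj
      · rw [rk_ptn_a ord nV hw] at hyx; exact Nat.not_lt_zero _ hyx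
    · rw [rk_ptn_a ord nV hv] at hxy; exact Nat.not_lt_zero _ hxy
  · exact ab_case ord nV X _ _ _ hxy hyx
  · exact ab_case ord nV X _ _ _ hxy hyx
  · exact ab_case ord nV X _ _ _ hxy hyx
  · exact ab_case ord nV X _ _ _ hxy hyx
  · exact ab_case ord nV X _ _ _ hxy hyx
  · exact ab_case ord nV X _ _ _ hxy hyx
  · exact ab_case ord nV X _ _ _ hxy hyx

lemma mem_ptn (X : Finset V) (x : Ag V) : s(x, ptn X x) ∈ MstarSR X :=
  (mem_Mstar X x _).2 rfl

lemma stable (G : SimpleGraph V) (ord : V → V → ℕ) (nV : ℕ) (X : Finset V)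
    (hX : ∀ v ∈ X, ∀ w ∈ X, ¬ G.Adj v w) :
    IsStable (srAcc G) (srRk ord nV) (MstarSR X) := by
  constructor
  · constructor
    · intro a b hab
      rw [mem_Mstar] at hab
      subst hab
      obtain ⟨c, i, v⟩ := a
      cases c
      · exact Or.inl (accP_pair G X v i)
      · refine Or.inr ?_
        have h := accP_pair G X v (sig X v i)
        rwa [sig_invol] at h
    · intro a b c hb hc
      rw [mem_Mstar] at hb hc
      rw [hb, hc]
  · rintro a b ⟨hacc, ha, hb⟩
    have hma : Matched (MstarSR X) a := ⟨_, mem_ptn X a⟩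
    have hmb : Matched (MstarSR X) b := ⟨_, mem_ptn X b⟩
    obtain ⟨c, hc, hlt⟩ := ha.resolve_left (not_not_intro hma)
    obtain ⟨d, hd, hlt'⟩ := hb.resolve_left (not_not_intro hmb)
    rw [mem_Mstar] at hc hd
    subst hc; subst hd
    rcases hacc with h | h
    · exact no_block G ord nV X hX a b h hlt hlt'
    · exact no_block G ord nV X hX b a h hlt' hlt

lemma inter_PSR (X : Finset V) : MstarSR X ∩ PSR V = ∅ := by
  rw [Finset.eq_empty_iff_forall_notMem]
  intro e he
  rw [Finset.mem_inter] at he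
  obtain ⟨h1, h2⟩ := he
  simp only [PSR, Finset.mem_image, Finset.mem_univ, true_and] at h2
  obtain ⟨v, rfl⟩ := h2
  rw [mem_Mstar, ptn_a] at h1
  have : (1 : Fin 5) = sig X v 1 := by
    simpa [bA, Prod.ext_iff] using h1
  by_cases h : v ∈ X <;> simp [sig, h] at this

lemma fM_inj (X : Finset V) : Function.Injective (fM X) := by
  rintro ⟨i, v⟩ ⟨j, w⟩ h
  rw [fM, fM, Sym2.eq_iff] at h
  rcases h with ⟨h1, h2⟩ | ⟨h1, h2⟩
  · obtain ⟨rfl, rfl⟩ : i = j ∧ v = w := by simpa [aA, Prod.ext_iff] using h1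
    rfl
  · exact absurd h1 (by simp [aA, bA, Prod.ext_iff])

lemma fM1_inj : Function.Injective (fun p : Fin 5 × V => s(aA p.1 p.2, bA p.1 p.2)) := by
  rintro ⟨i, v⟩ ⟨j, w⟩ h
  rw [Sym2.eq_iff] at h
  rcases h with ⟨h1, h2⟩ | ⟨h1, h2⟩
  · obtain ⟨rfl, rfl⟩ : i = j ∧ v = w := by simpa [aA, Prod.ext_iff] using h1
    rfl
  · exact absurd h1 (by simp [aA, bA, Prod.ext_iff])

lemma inter_eq (X : Finset V) :
    MstarSR X ∩ M1SR V = (Finset.univ.filter fun p : Fin 5 × V =>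
      sig X p.2 p.1 = p.1).image (fun p : Fin 5 × V => s(aA p.1 p.2, bA p.1 p.2)) := by
  ext e
  simp only [Finset.mem_inter, Mstar_eq, M1SR, Finset.mem_image, Finset.mem_filter,
    Finset.mem_univ, true_and, Prod.exists]
  constructor
  · rintro ⟨⟨i, v, rfl⟩, j, w, he⟩
    rw [fM, Sym2.eq_iff] at he
    rcases he with ⟨h1, h2⟩ | ⟨h1, h2⟩
    · obtain ⟨rfl, rfl⟩ : j = i ∧ w = v := by simpa [aA, Prod.ext_iff] using h1
      have hs : sig X w j = j := by simpa [bA, Prod.ext_iff] using h2.symm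
      exact ⟨j, w, hs, by rw [fM, hs]⟩
    · exact absurd h1 (by simp [aA, bA, Prod.ext_iff])
  · rintro ⟨i, v, hfix, rfl⟩
    exact ⟨⟨i, v, by rw [fM, hfix]⟩, i, v, rfl⟩

lemma inter_card (X : Finset V) :
    (MstarSR X ∩ M1SR V).card = Fintype.card V + 2 * X.card := by
  rw [inter_eq, Finset.card_image_of_injective _ fM1_inj, Finset.card_filter]
  rw [← Finset.univ_product_univ, Finset.sum_product_right]
  have hin : ∀ v : V, (∑ i : Fin 5, if sig X v i = i then (1:ℕ) else 0)
      = 1 + if v ∈ X then 2 else 0 := by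
    intro v
    by_cases h : v ∈ X <;> unfold sig <;> simp only [h, if_true, if_false] <;> decide
  simp only [hin]
  rw [Finset.sum_add_distrib, Finset.sum_const, Finset.sum_ite_mem, Finset.univ_inter,
    Finset.sum_const, Finset.card_univ, smul_eq_mul, mul_one, smul_eq_mul]
  ring

lemma card_symmDiff (X : Finset V) :
    (MstarSR X ∆ M1SR V).card = 8 * Fintype.card V - 4 * X.card := by
  have hsub : X.card ≤ Fintype.card V := Finset.card_le_univ X
  have hM : (MstarSR X).card = 5 * Fintype.card V := by
    rw [Mstar_eq, Finset.card_image_of_injective _ (fM_inj X), Finset.card_univ]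
    simp [Fintype.card_prod]
  have hM1 : (M1SR V).card = 5 * Fintype.card V := by
    rw [M1SR, Finset.card_image_of_injective _ fM1_inj, Finset.card_univ]
    simp [Fintype.card_prod]
  have hint := inter_card X
  have e1 := Finset.card_sdiff_add_card_inter (MstarSR X) (M1SR V)
  have e2 := Finset.card_sdiff_add_card_inter (M1SR V) (MstarSR X)
  rw [Finset.inter_comm] at e2
  rw [symmDiff_def, Finset.sup_eq_union,
    Finset.card_union_of_disjoint (disjoint_sdiff_sdiff)]
  omega

end Stmt5Aux


/-- Forward direction of the reduction: if `X` is an independent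
set of size `ℓ`, then `M*` is stable, avoids all forbidden pairs, and
`|M* △ M1| = 8|V| − 4ℓ`. -/
theorem stmt5 {V : Type*} [Fintype V] [DecidableEq V] (G : SimpleGraph V)
    (ord : V → V → ℕ)
    (hordInj : ∀ v w w', G.Adj v w → G.Adj v w' → ord v w = ord v w' → w = w')
    (hordLt : ∀ v w, G.Adj v w → ord v w < Fintype.card V)
    (X : Finset V) (hX : ∀ v ∈ X, ∀ w ∈ X, ¬ G.Adj v w)
    (ℓ : ℕ) (hℓ : X.card = ℓ) :
    IsStable (srAcc G) (srRk ord (Fintype.card V)) (MstarSR X) ∧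
    MstarSR X ∩ PSR V = ∅ ∧
    (MstarSR X ∆ M1SR V).card = 8 * Fintype.card V - 4 * ℓ := by
  refine ⟨Stmt5Aux.stable G ord (Fintype.card V) X hX, Stmt5Aux.inter_PSR X, ?_⟩
  rw [Stmt5Aux.card_symmDiff X, hℓ]
end

section
/- Let G be a finite simple graph and ℓ a nonnegative integer. Construct the Stable Roommates instance with agents a₁ᵛ, …, a₅ᵛ, b₁ᵛ, …, b₅ᵛ for each v ∈ V(G) and preferences a₁ᵛ: b₁ᵛ ≻ b₂ᵛ; a₂ᵛ: b₃ᵛ ≻ b₂ᵛ ≻ [N*(v)] ≻ b₁ᵛ (where [N*(v)] is a fixed arbitrary strict order of {a₂ʷ : w a neighbor of v in G}); a₃ᵛ: b₂ᵛ ≻ b₃ᵛ; a₄ᵛ: b₅ᵛ ≻ b₃ᵛ ≻ b₄ᵛ; a₅ᵛ: b₄ᵛ ≻ b₅ᵛ; b₁ᵛ: a₂ᵛ ≻ a₁ᵛ; b₂ᵛ: a₁ᵛ ≻ a₂ᵛ ≻ a₃ᵛ; b₃ᵛ: a₃ᵛ ≻ a₄ᵛ ≻ a₂ᵛ; b₄ᵛ: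 a₄ᵛ ≻ a₅ᵛ; b₅ᵛ: a₅ᵛ ≻ a₄ᵛ. Let M1 := {{aᵢᵛ, bᵢᵛ} : i ∈ {1,…,5}, v ∈ V(G)} and P := {{a₂ᵛ, b₂ᵛ} : v ∈ V(G)}. Then G has an independent set of size at least ℓ if and only if there exists a stable matching M* of the constructed instance with M* ∩ P = ∅ and |M1 △ M*| ≤ 8|V(G)| − 4ℓ. -/
open scoped symmDiff

set_option linter.unusedSectionVars false
namespace Stmt7

def fin3 (k : Fin 3) : k = 0 ∨ k = 1 ∨ k = 2 := by omega
def fin5 (k : Fin 5) : k = 0 ∨ k = 1 ∨ k = 2 ∨ k = 3 ∨ k = 4 := by omega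

/-- the partner permutations for the three gadget matchings M2, M3, M3' -/
def τ : Fin 3 → Fin 5 → Fin 5
  | 0 => ![0, 2, 1, 4, 3]
  | 1 => ![1, 0, 2, 3, 4]
  | 2 => ![1, 0, 2, 4, 3]

lemma τ_invol (k : Fin 3) (i : Fin 5) : τ k (τ k i) = i := by revert k i; decide

variable {V : Type*} [Fintype V] [DecidableEq V]

/-- generated matching from a choice of gadget type per vertex -/
def Mgen (c : V → Fin 3) : Finset (Sym2 (Ag V)) :=
  Finset.univ.image (fun p : Fin 5 × V => s(aA p.1 p.2, bA (τ (c p.2) p.1) p.2))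

def pfun (c : V → Fin 3) : Ag V → Ag V
  | (false, i, v) => (true, τ (c v) i, v)
  | (true, i, v) => (false, τ (c v) i, v)

lemma pfun_invol (c : V → Fin 3) (x : Ag V) : pfun c (pfun c x) = x := by
  obtain ⟨b, i, v⟩ := x
  cases b <;> simp [pfun, τ_invol]

lemma mem_Mgen {c : V → Fin 3} {x y : Ag V} :
    s(x, y) ∈ Mgen c ↔ y = pfun c x := by
  constructor
  · intro h
    simp only [Mgen, Finset.mem_image, Finset.mem_univ, true_and] at h
    obtain ⟨⟨i, v⟩, hp⟩ := h
    rw [Sym2.eq_iff] at hp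
    rcases hp with ⟨h1, h2⟩ | ⟨h1, h2⟩
    · rw [← h1, ← h2]; rfl
    · rw [← h2, ← h1]
      show aA i v = pfun c (bA (τ (c v) i) v)
      simp [pfun, aA, bA, τ_invol]
  · rintro rfl
    simp only [Mgen, Finset.mem_image, Finset.mem_univ, true_and]
    obtain ⟨b, i, v⟩ := x
    cases b
    · exact ⟨(i, v), rfl⟩
    · exact ⟨(τ (c v) i, v), by rw [Sym2.eq_iff]; right
                                exact ⟨rfl, by simp [pfun, bA, τ_invol]⟩⟩

section Acc
variable {V : Type*} (G : SimpleGraph V)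

lemma acc_inv_a0 {v : V} {y : Ag V} (h : srAcc G (aA 0 v) y) :
    y = bA 0 v ∨ y = bA 1 v := by
  rcases h with h | h <;>
    simp_all [srAccP, aA, bA, Prod.ext_iff] <;> tauto

lemma acc_inv_a1 {v : V} {y : Ag V} (h : srAcc G (aA 1 v) y) :
    y = bA 2 v ∨ y = bA 1 v ∨ y = bA 0 v ∨ ∃ w, G.Adj v w ∧ y = aA 1 w := by
  rcases h with h | h <;>
    simp_all [srAccP, aA, bA, Prod.ext_iff] <;> tauto

lemma acc_inv_a2 {v : V} {y : Ag V} (h : srAcc G (aA 2 v) y) :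
    y = bA 1 v ∨ y = bA 2 v := by
  rcases h with h | h <;> simp_all [srAccP, aA, bA, Prod.ext_iff] <;> tauto

lemma acc_inv_a3 {v : V} {y : Ag V} (h : srAcc G (aA 3 v) y) :
    y = bA 4 v ∨ y = bA 2 v ∨ y = bA 3 v := by
  rcases h with h | h <;> simp_all [srAccP, aA, bA, Prod.ext_iff] <;> tauto

lemma acc_inv_a4 {v : V} {y : Ag V} (h : srAcc G (aA 4 v) y) :
    y = bA 3 v ∨ y = bA 4 v := by
  rcases h with h | h <;> simp_all [srAccP, aA, bA, Prod.ext_iff] <;> tauto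

lemma acc_inv_b0 {v : V} {y : Ag V} (h : srAcc G (bA 0 v) y) :
    y = aA 0 v ∨ y = aA 1 v := by
  rcases h with h | h <;> simp_all [srAccP, aA, bA, Prod.ext_iff] <;> tauto

lemma acc_inv_b1 {v : V} {y : Ag V} (h : srAcc G (bA 1 v) y) :
    y = aA 0 v ∨ y = aA 1 v ∨ y = aA 2 v := by
  rcases h with h | h <;> simp_all [srAccP, aA, bA, Prod.ext_iff] <;> tauto

lemma acc_inv_b2 {v : V} {y : Ag V} (h : srAcc G (bA 2 v) y) :
    y = aA 1 v ∨ y = aA 2 v ∨ y = aA 3 v := by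
  rcases h with h | h <;> simp_all [srAccP, aA, bA, Prod.ext_iff] <;> tauto

lemma acc_inv_b3 {v : V} {y : Ag V} (h : srAcc G (bA 3 v) y) :
    y = aA 3 v ∨ y = aA 4 v := by
  rcases h with h | h <;> simp_all [srAccP, aA, bA, Prod.ext_iff] <;> tauto

lemma acc_inv_b4 {v : V} {y : Ag V} (h : srAcc G (bA 4 v) y) :
    y = aA 3 v ∨ y = aA 4 v := by
  rcases h with h | h <;> simp_all [srAccP, aA, bA, Prod.ext_iff] <;> tauto

lemma acc_ab {v : V} {i j : Fin 5} (h : rkAB 0 i j ≠ 99 ∨ rkBA j i ≠ 99) :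
    srAcc G (aA i v) (bA j v) := by
  fin_cases i <;> fin_cases j <;>
    simp_all [srAcc, srAccP, aA, bA, Prod.ext_iff, rkAB, rkBA] <;> tauto

lemma acc_aa {v w : V} (h : G.Adj v w) : srAcc G (aA 1 v) (aA 1 w) :=
  Or.inl (Or.inr (Or.inr (Or.inl ⟨v, w, rfl, h, rfl⟩)))

end Acc

lemma acc_symm {V : Type*} {G : SimpleGraph V} {x y : Ag V} (h : srAcc G x y) :
    srAcc G y x := h.symm

section Stable
variable {V : Type*} [Fintype V] [DecidableEq V] {G : SimpleGraph V}
  (ord : V → V → ℕ) {n : ℕ}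

lemma no_pref (c : V → Fin 3) (hc : ∀ v w, G.Adj v w → c v = 0 ∨ c w = 0)
    {a b : Ag V} (h : srAccP G a b)
    (h1 : srRk ord n a b < srRk ord n a (pfun c a))
    (h2 : srRk ord n b a < srRk ord n b (pfun c b)) : False := by
  rcases h with ⟨v, rfl, rfl | rfl⟩ | ⟨v, rfl, rfl | rfl | rfl⟩ |
    ⟨v, w, rfl, hadj, rfl⟩ | ⟨v, rfl, rfl | rfl⟩ | ⟨v, rfl, rfl | rfl | rfl⟩ |
    ⟨v, rfl, rfl | rfl⟩
  · rcases fin3 (c v) with hk | hk | hk <;>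
        simp [pfun, srRk, aA, bA, τ, rkAB, rkBA, hk] at h1 h2 <;> omega
  · rcases fin3 (c v) with hk | hk | hk <;>
        simp [pfun, srRk, aA, bA, τ, rkAB, rkBA, hk] at h1 h2 <;> omega
  · rcases fin3 (c v) with hk | hk | hk <;>
        simp [pfun, srRk, aA, bA, τ, rkAB, rkBA, hk] at h1 h2 <;> omega
  · rcases fin3 (c v) with hk | hk | hk <;>
        simp [pfun, srRk, aA, bA, τ, rkAB, rkBA, hk] at h1 h2 <;> omega
  · rcases fin3 (c v) with hk | hk | hk <;>
        simp [pfun, srRk, aA, bA, τ, rkAB, rkBA, hk] at h1 h2 <;> omega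
  · rcases fin3 (c v) with hk | hk | hk
    · (simp [pfun, srRk, aA, bA, τ, rkAB, hk] at h1) <;> omega
    · rcases hc v w hadj with hk' | hk'
      · exact absurd hk' (by rw [hk]; decide)
      · (simp [pfun, srRk, aA, bA, τ, rkAB, hk'] at h2) <;> omega
    · rcases hc v w hadj with hk' | hk'
      · exact absurd hk' (by rw [hk]; decide)
      · (simp [pfun, srRk, aA, bA, τ, rkAB, hk'] at h2) <;> omega
  · rcases fin3 (c v) with hk | hk | hk <;>
        simp [pfun, srRk, aA, bA, τ, rkAB, rkBA, hk] at h1 h2 <;> omega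
  · rcases fin3 (c v) with hk | hk | hk <;>
        simp [pfun, srRk, aA, bA, τ, rkAB, rkBA, hk] at h1 h2 <;> omega
  · rcases fin3 (c v) with hk | hk | hk <;>
        simp [pfun, srRk, aA, bA, τ, rkAB, rkBA, hk] at h1 h2 <;> omega
  · rcases fin3 (c v) with hk | hk | hk <;>
        simp [pfun, srRk, aA, bA, τ, rkAB, rkBA, hk] at h1 h2 <;> omega
  · rcases fin3 (c v) with hk | hk | hk <;>
        simp [pfun, srRk, aA, bA, τ, rkAB, rkBA, hk] at h1 h2 <;> omega
  · rcases fin3 (c v) with hk | hk | hk <;>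
        simp [pfun, srRk, aA, bA, τ, rkAB, rkBA, hk] at h1 h2 <;> omega
  · rcases fin3 (c v) with hk | hk | hk <;>
        simp [pfun, srRk, aA, bA, τ, rkAB, rkBA, hk] at h1 h2 <;> omega

lemma Mgen_matching (c : V → Fin 3) :
    IsSRMatching (srAcc G) (Mgen c) := by
  constructor
  · intro a b h
    rw [mem_Mgen] at h
    subst h
    obtain ⟨bb, i, v⟩ := a
    cases bb
    · show srAcc G (aA i v) (bA (τ (c v) i) v)
      apply acc_ab
      rcases fin3 (c v) with hk | hk | hk <;> rw [hk] <;> revert i <;> decide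
    · show srAcc G (bA i v) (aA (τ (c v) i) v)
      apply acc_symm
      apply acc_ab
      rcases fin3 (c v) with hk | hk | hk <;> rw [hk] <;> revert i <;> decide
  · intro a b b' h h'
    rw [mem_Mgen] at h h'
    rw [h, h']

lemma Mgen_stable (c : V → Fin 3) (hc : ∀ v w, G.Adj v w → c v = 0 ∨ c w = 0) :
    IsStable (srAcc G) (srRk ord (Fintype.card V)) (Mgen c) := by
  refine ⟨Mgen_matching c, ?_⟩
  rintro a b ⟨hacc, hA, hB⟩
  have hm : ∀ x : Ag V, Matched (Mgen c) x := fun x => ⟨pfun c x, mem_Mgen.2 rfl⟩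
  rcases hA with hA | ⟨y, hy, hlt⟩
  · exact hA (hm a)
  rcases hB with hB | ⟨z, hz, hlt'⟩
  · exact hB (hm b)
  rw [mem_Mgen] at hy hz
  subst hy; subst hz
  rcases hacc with h | h
  · exact no_pref ord c hc h hlt hlt'
  · exact no_pref ord c hc h hlt' hlt

lemma Mgen_avoids (c : V → Fin 3) : Mgen c ∩ PSR V = ∅ := by
  rw [Finset.eq_empty_iff_forall_notMem]
  intro x hx
  rw [Finset.mem_inter] at hx
  obtain ⟨h1, h2⟩ := hx
  simp only [PSR, Finset.mem_image, Finset.mem_univ, true_and] at h2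
  obtain ⟨v, rfl⟩ := h2
  rw [mem_Mgen] at h1
  have : τ (c v) 1 = 1 := by
    have := congrArg (fun p : Ag V => p.2.1) h1
    simpa [pfun, aA, bA] using this.symm
  rcases fin3 (c v) with hk | hk | hk <;> rw [hk] at this <;> simp [τ] at this

lemma f1_inj : Function.Injective
    (fun p : Fin 5 × V => s(aA p.1 p.2, bA p.1 p.2)) := by
  rintro ⟨i, v⟩ ⟨j, w⟩ h
  rw [Sym2.eq_iff] at h
  simp only [aA, bA, Prod.mk.injEq] at h
  rcases h with ⟨⟨_, h1, h2⟩, _⟩ | ⟨⟨h, _⟩, _⟩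
  · exact Prod.ext h1 h2
  · exact absurd h (by simp)

lemma fc_inj (c : V → Fin 3) : Function.Injective
    (fun p : Fin 5 × V => s(aA p.1 p.2, bA (τ (c p.2) p.1) p.2)) := by
  rintro ⟨i, v⟩ ⟨j, w⟩ h
  rw [Sym2.eq_iff] at h
  simp only [aA, bA, Prod.mk.injEq] at h
  rcases h with ⟨⟨_, h1, h2⟩, _⟩ | ⟨⟨h, _⟩, _⟩
  · exact Prod.ext h1 h2
  · exact absurd h (by simp)

lemma inter_eq (c : V → Fin 3) :
    M1SR V ∩ Mgen c = (Finset.univ.filter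
      (fun p : Fin 5 × V => τ (c p.2) p.1 = p.1)).image
      (fun p : Fin 5 × V => s(aA p.1 p.2, bA p.1 p.2)) := by
  ext x
  simp only [Finset.mem_inter, Finset.mem_image, Finset.mem_filter, Finset.mem_univ,
    true_and, M1SR, Mgen]
  constructor
  · rintro ⟨⟨⟨i, v⟩, rfl⟩, ⟨⟨j, w⟩, hq⟩⟩
    refine ⟨(i, v), ?_, rfl⟩
    rw [Sym2.eq_iff] at hq
    simp only [aA, bA, Prod.mk.injEq] at hq
    rcases hq with ⟨⟨_, h1, h2⟩, ⟨_, h3, _⟩⟩ | ⟨⟨h, _⟩, _⟩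
    · subst h1; subst h2; rw [h3]
    · exact absurd h (by simp)
  · rintro ⟨⟨i, v⟩, hp, rfl⟩
    exact ⟨⟨(i, v), rfl⟩, ⟨(i, v), by rw [hp]⟩⟩

lemma sum_fix (k : Fin 3) :
    (∑ i : Fin 5, if τ k i = i then 1 else 0) = if k = 1 then 3 else 1 := by
  revert k; decide

lemma card_symmdiff (c : V → Fin 3) :
    (M1SR V ∆ Mgen c).card + 4 * (Finset.univ.filter (fun v => c v = 1)).card
      = 8 * Fintype.card V := by
  classical
  set F := (Finset.univ.filter (fun v => c v = 1)).card with hF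
  have hcard1 : (M1SR V).card = 5 * Fintype.card V := by
    rw [M1SR, Finset.card_image_of_injective _ f1_inj, Finset.card_univ]
    simp [Fintype.card_prod]
  have hcard2 : (Mgen c).card = 5 * Fintype.card V := by
    rw [Mgen, Finset.card_image_of_injective _ (fc_inj c), Finset.card_univ]
    simp [Fintype.card_prod]
  have hinter : (M1SR V ∩ Mgen c).card
      = (Finset.univ.filter (fun p : Fin 5 × V => τ (c p.2) p.1 = p.1)).card := by
    rw [inter_eq, Finset.card_image_of_injective _ f1_inj]
  have hfilter : (Finset.univ.filter (fun p : Fin 5 × V => τ (c p.2) p.1 = p.1)).card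
      = 3 * F + (Finset.univ.filter (fun v => ¬ c v = 1)).card := by
    rw [Finset.card_filter]
    rw [Fintype.sum_prod_type_right]
    have : ∀ v : V, (∑ i : Fin 5, if τ (c v) i = i then 1 else 0)
        = if c v = 1 then 3 else 1 := fun v => sum_fix (c v)
    rw [Finset.sum_congr rfl (fun v _ => this v)]
    rw [Finset.sum_ite, Finset.sum_const, Finset.sum_const]
    simp [hF, mul_comm]
  have hsplit : F + (Finset.univ.filter (fun v => ¬ c v = 1)).card = Fintype.card V := by
    rw [hF, Finset.card_filter_add_card_filter_not, Finset.card_univ]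
  have hsd : (M1SR V ∆ Mgen c).card + (M1SR V ∩ Mgen c).card + (M1SR V ∩ Mgen c).card
      = (M1SR V).card + (Mgen c).card := by
    rw [symmDiff_def, Finset.sup_eq_union, Finset.card_union_of_disjoint disjoint_sdiff_sdiff]
    have e1 := Finset.card_sdiff_add_card_inter (M1SR V) (Mgen c)
    have e2 := Finset.card_sdiff_add_card_inter (Mgen c) (M1SR V)
    rw [Finset.inter_comm] at e2
    omega
  omega

end Stable

section Struct
variable {V : Type*} [Fintype V] [DecidableEq V] {G : SimpleGraph V} {ord : V → V → ℕ}
  {n : ℕ} {M : Finset (Sym2 (Ag V))}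

lemma gadget (hst : IsStable (srAcc G) (srRk ord n) M)
    (hP : ∀ v : V, s(aA 1 v, bA 1 v) ∉ M) (v : V) :
    ∃ k : Fin 3, ∀ i : Fin 5, s(aA i v, bA (τ k i) v) ∈ M := by
  obtain ⟨⟨hacc, huniq⟩, hnb⟩ := hst
  have smem : ∀ {x y : Ag V}, s(x, y) ∈ M → s(y, x) ∈ M := by
    intro x y h; rwa [Sym2.eq_swap]
  have blk : ∀ a b : Ag V, srAcc G a b →
      ((∀ y, s(a, y) ∉ M) ∨ ∃ y, s(a, y) ∈ M ∧ srRk ord n a b < srRk ord n a y) →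
      ((∀ y, s(b, y) ∉ M) ∨ ∃ y, s(b, y) ∈ M ∧ srRk ord n b a < srRk ord n b y) →
      False := by
    intro a b h ha hb
    refine hnb a b ⟨h, ?_, ?_⟩
    · rcases ha with h' | h'
      · exact Or.inl (fun ⟨y, hy⟩ => h' y hy)
      · exact Or.inr h'
    · rcases hb with h' | h'
      · exact Or.inl (fun ⟨y, hy⟩ => h' y hy)
      · exact Or.inr h'
  by_cases h21 : s(aA 1 v, bA 0 v) ∈ M
  · -- Case A : a2 matched to b1
    have h12 : s(aA 0 v, bA 1 v) ∈ M := by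
      by_contra h12
      have ha1 : ∀ y, s(aA 0 v, y) ∉ M := by
        intro y hy
        rcases acc_inv_a0 G (hacc _ _ hy) with rfl | rfl
        · exact absurd (huniq (bA 0 v) (aA 0 v) (aA 1 v) (smem hy) (smem h21))
            (by simp [aA])
        · exact h12 hy
      by_cases h32 : s(bA 1 v, aA 2 v) ∈ M
      · exact blk (aA 0 v) (bA 1 v) (acc_ab G (by decide)) (Or.inl ha1)
          (Or.inr ⟨aA 2 v, h32, by simp [srRk, aA, bA, rkBA]⟩)
      · refine blk (aA 0 v) (bA 1 v) (acc_ab G (by decide)) (Or.inl ha1) (Or.inl ?_)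
        intro y hy
        rcases acc_inv_b1 G (hacc _ _ hy) with rfl | rfl | rfl
        · exact ha1 _ (smem hy)
        · exact absurd (huniq (aA 1 v) (bA 1 v) (bA 0 v) (smem hy) h21) (by simp [bA])
        · exact h32 hy
    have h33 : s(aA 2 v, bA 2 v) ∈ M := by
      by_contra h33
      have ha3 : ∀ y, s(aA 2 v, y) ∉ M := by
        intro y hy
        rcases acc_inv_a2 G (hacc _ _ hy) with rfl | rfl
        · exact absurd (huniq (bA 1 v) (aA 2 v) (aA 0 v) (smem hy) (smem h12))
            (by simp [aA])
        · exact h33 hy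
      by_cases h43 : s(bA 2 v, aA 3 v) ∈ M
      · exact blk (aA 2 v) (bA 2 v) (acc_ab G (by decide)) (Or.inl ha3)
          (Or.inr ⟨aA 3 v, h43, by simp [srRk, aA, bA, rkBA]⟩)
      · refine blk (aA 2 v) (bA 2 v) (acc_ab G (by decide)) (Or.inl ha3) (Or.inl ?_)
        intro y hy
        rcases acc_inv_b2 G (hacc _ _ hy) with rfl | rfl | rfl
        · exact absurd (huniq (aA 1 v) (bA 2 v) (bA 0 v) (smem hy) h21) (by simp [bA])
        · exact ha3 _ (smem hy)
        · exact h43 hy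
    by_cases h45 : s(aA 3 v, bA 4 v) ∈ M
    · have h54 : s(aA 4 v, bA 3 v) ∈ M := by
        by_contra h54
        have ha5 : ∀ y, s(aA 4 v, y) ∉ M := by
          intro y hy
          rcases acc_inv_a4 G (hacc _ _ hy) with rfl | rfl
          · exact h54 hy
          · exact absurd (huniq (bA 4 v) (aA 4 v) (aA 3 v) (smem hy) (smem h45))
              (by simp [aA])
        have hb4 : ∀ y, s(bA 3 v, y) ∉ M := by
          intro y hy
          rcases acc_inv_b3 G (hacc _ _ hy) with rfl | rfl
          · exact absurd (huniq (aA 3 v) (bA 3 v) (bA 4 v) (smem hy) h45) (by simp [bA])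
          · exact ha5 _ (smem hy)
        exact blk (aA 4 v) (bA 3 v) (acc_ab G (by decide)) (Or.inl ha5) (Or.inl hb4)
      exact ⟨2, fun i => by fin_cases i; exacts [h12, h21, h33, h45, h54]⟩
    · have h55 : s(aA 4 v, bA 4 v) ∈ M := by
        by_contra h55
        have hb5 : ∀ y, s(bA 4 v, y) ∉ M := by
          intro y hy
          rcases acc_inv_b4 G (hacc _ _ hy) with rfl | rfl
          · exact h45 (smem hy)
          · exact h55 (smem hy)
        by_cases h44 : s(aA 3 v, bA 3 v) ∈ M
        · exact blk (aA 3 v) (bA 4 v) (acc_ab G (by decide))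
            (Or.inr ⟨bA 3 v, h44, by simp [srRk, aA, bA, rkAB]⟩) (Or.inl hb5)
        · refine blk (aA 3 v) (bA 4 v) (acc_ab G (by decide)) (Or.inl ?_) (Or.inl hb5)
          intro y hy
          rcases acc_inv_a3 G (hacc _ _ hy) with rfl | rfl | rfl
          · exact h45 hy
          · exact absurd (huniq (bA 2 v) (aA 3 v) (aA 2 v) (smem hy) (smem h33))
              (by simp [aA])
          · exact h44 hy
      have h44 : s(aA 3 v, bA 3 v) ∈ M := by
        by_contra h44
        have ha4 : ∀ y, s(aA 3 v, y) ∉ M := by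
          intro y hy
          rcases acc_inv_a3 G (hacc _ _ hy) with rfl | rfl | rfl
          · exact h45 hy
          · exact absurd (huniq (bA 2 v) (aA 3 v) (aA 2 v) (smem hy) (smem h33))
              (by simp [aA])
          · exact h44 hy
        have hb4 : ∀ y, s(bA 3 v, y) ∉ M := by
          intro y hy
          rcases acc_inv_b3 G (hacc _ _ hy) with rfl | rfl
          · exact ha4 _ (smem hy)
          · exact absurd (huniq (aA 4 v) (bA 3 v) (bA 4 v) (smem hy) h55) (by simp [bA])
        exact blk (aA 3 v) (bA 3 v) (acc_ab G (by decide)) (Or.inl ha4) (Or.inl hb4)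
      exact ⟨1, fun i => by fin_cases i; exacts [h12, h21, h33, h44, h55]⟩
  · -- Case B : a2 not matched to b1
    have h11 : s(aA 0 v, bA 0 v) ∈ M := by
      by_contra h11
      have hb1 : ∀ y, s(bA 0 v, y) ∉ M := by
        intro y hy
        rcases acc_inv_b0 G (hacc _ _ hy) with rfl | rfl
        · exact h11 (smem hy)
        · exact h21 (smem hy)
      by_cases h12 : s(aA 0 v, bA 1 v) ∈ M
      · exact blk (aA 0 v) (bA 0 v) (acc_ab G (by decide))
          (Or.inr ⟨bA 1 v, h12, by simp [srRk, aA, bA, rkAB]⟩) (Or.inl hb1)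
      · refine blk (aA 0 v) (bA 0 v) (acc_ab G (by decide)) (Or.inl ?_) (Or.inl hb1)
        intro y hy
        rcases acc_inv_a0 G (hacc _ _ hy) with rfl | rfl
        · exact h11 hy
        · exact h12 hy
    have h23 : s(aA 1 v, bA 2 v) ∈ M := by
      by_contra h23
      have ha2 : (∀ y, s(aA 1 v, y) ∉ M) ∨
          ∃ y, s(aA 1 v, y) ∈ M ∧
            srRk ord n (aA 1 v) (bA 1 v) < srRk ord n (aA 1 v) y := by
        by_cases hm : ∃ y, s(aA 1 v, y) ∈ M
        · obtain ⟨y, hy⟩ := hm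
          rcases acc_inv_a1 G (hacc _ _ hy) with rfl | rfl | rfl | ⟨w, hadj, rfl⟩
          · exact absurd hy h23
          · exact absurd hy (hP v)
          · exact absurd hy h21
          · exact Or.inr ⟨aA 1 w, hy, by simp [srRk, aA, bA, rkAB] <;> omega⟩
        · exact Or.inl (fun y hy => hm ⟨y, hy⟩)
      by_cases h32' : s(bA 1 v, aA 2 v) ∈ M
      · exact blk (aA 1 v) (bA 1 v) (acc_ab G (by decide)) ha2
          (Or.inr ⟨aA 2 v, h32', by simp [srRk, aA, bA, rkBA]⟩)
      · refine blk (aA 1 v) (bA 1 v) (acc_ab G (by decide)) ha2 (Or.inl ?_)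
        intro y hy
        rcases acc_inv_b1 G (hacc _ _ hy) with rfl | rfl | rfl
        · exact absurd (huniq (aA 0 v) (bA 1 v) (bA 0 v) (smem hy) h11) (by simp [bA])
        · exact hP v (smem hy)
        · exact h32' hy
    have h32 : s(aA 2 v, bA 1 v) ∈ M := by
      by_contra h32
      have ha3 : ∀ y, s(aA 2 v, y) ∉ M := by
        intro y hy
        rcases acc_inv_a2 G (hacc _ _ hy) with rfl | rfl
        · exact h32 hy
        · exact absurd (huniq (bA 2 v) (aA 2 v) (aA 1 v) (smem hy) (smem h23))
            (by simp [aA])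
      have hb2 : ∀ y, s(bA 1 v, y) ∉ M := by
        intro y hy
        rcases acc_inv_b1 G (hacc _ _ hy) with rfl | rfl | rfl
        · exact absurd (huniq (aA 0 v) (bA 1 v) (bA 0 v) (smem hy) h11) (by simp [bA])
        · exact hP v (smem hy)
        · exact ha3 _ (smem hy)
      exact blk (aA 2 v) (bA 1 v) (acc_ab G (by decide)) (Or.inl ha3) (Or.inl hb2)
    have h45 : s(aA 3 v, bA 4 v) ∈ M := by
      by_contra h45
      have hb : (∀ y, s(bA 2 v, y) ∉ M) ∨
          ∃ y, s(bA 2 v, y) ∈ M ∧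
            srRk ord n (bA 2 v) (aA 3 v) < srRk ord n (bA 2 v) y :=
        Or.inr ⟨aA 1 v, smem h23, by simp [srRk, aA, bA, rkBA]⟩
      by_cases h44 : s(aA 3 v, bA 3 v) ∈ M
      · exact blk (aA 3 v) (bA 2 v) (acc_ab G (by decide))
          (Or.inr ⟨bA 3 v, h44, by simp [srRk, aA, bA, rkAB]⟩) hb
      · refine blk (aA 3 v) (bA 2 v) (acc_ab G (by decide)) (Or.inl ?_) hb
        intro y hy
        rcases acc_inv_a3 G (hacc _ _ hy) with rfl | rfl | rfl
        · exact h45 hy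
        · exact absurd (huniq (bA 2 v) (aA 3 v) (aA 1 v) (smem hy) (smem h23))
            (by simp [aA])
        · exact h44 hy
    have h54 : s(aA 4 v, bA 3 v) ∈ M := by
      by_contra h54
      have ha5 : ∀ y, s(aA 4 v, y) ∉ M := by
        intro y hy
        rcases acc_inv_a4 G (hacc _ _ hy) with rfl | rfl
        · exact h54 hy
        · exact absurd (huniq (bA 4 v) (aA 4 v) (aA 3 v) (smem hy) (smem h45))
            (by simp [aA])
      have hb4 : ∀ y, s(bA 3 v, y) ∉ M := by
        intro y hy
        rcases acc_inv_b3 G (hacc _ _ hy) with rfl | rfl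
        · exact absurd (huniq (aA 3 v) (bA 3 v) (bA 4 v) (smem hy) h45) (by simp [bA])
        · exact ha5 _ (smem hy)
      exact blk (aA 4 v) (bA 3 v) (acc_ab G (by decide)) (Or.inl ha5) (Or.inl hb4)
    exact ⟨0, fun i => by fin_cases i; exacts [h11, h23, h32, h45, h54]⟩

lemma struct (hst : IsStable (srAcc G) (srRk ord n) M) (hPmem : M ∩ PSR V = ∅) :
    ∃ c : V → Fin 3, M = Mgen c := by
  have hP' : ∀ v : V, s(aA 1 v, bA 1 v) ∉ M := by
    intro v hv
    have hmem : s(aA 1 v, bA 1 v) ∈ M ∩ PSR V := by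
      refine Finset.mem_inter.2 ⟨hv, ?_⟩
      simp only [PSR, Finset.mem_image, Finset.mem_univ, true_and]
      exact ⟨v, rfl⟩
    rw [hPmem] at hmem
    exact absurd hmem (Finset.notMem_empty _)
  choose c hc using fun v => gadget hst hP' v
  refine ⟨c, Finset.Subset.antisymm ?_ ?_⟩
  · intro e
    induction e using Sym2.ind with
    | _ x y =>
      intro he
      obtain ⟨bb, i, w⟩ := x
      cases bb
      · have h1 : s(aA i w, bA (τ (c w) i) w) ∈ M := hc w i
        have h2 : y = bA (τ (c w) i) w := hst.1.2 (aA i w) y _ he h1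
        subst h2
        rw [mem_Mgen]; rfl
      · have h1 : s(aA (τ (c w) i) w, bA (τ (c w) (τ (c w) i)) w) ∈ M :=
          hc w (τ (c w) i)
        rw [τ_invol] at h1
        rw [Sym2.eq_swap] at h1
        have h2 : y = aA (τ (c w) i) w := hst.1.2 (bA i w) y _ he h1
        subst h2
        rw [mem_Mgen]; rfl
  · intro e he
    simp only [Mgen, Finset.mem_image, Finset.mem_univ, true_and] at he
    obtain ⟨⟨i, w⟩, rfl⟩ := he
    exact hc w i

end Struct
end Stmt7

/-- Full correctness of the reduction: `G` has an independent set
of size at least `ℓ` iff the constructed instance has a stable matching `M*`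
avoiding all forbidden pairs with `|M1 △ M*| ≤ 8|V| − 4ℓ`. -/
theorem stmt7 {V : Type*} [Fintype V] [DecidableEq V] (G : SimpleGraph V)
    (ord : V → V → ℕ)
    (hordInj : ∀ v w w', G.Adj v w → G.Adj v w' → ord v w = ord v w' → w = w')
    (hordLt : ∀ v w, G.Adj v w → ord v w < Fintype.card V)
    (ℓ : ℕ) :
    (∃ X : Finset V, (∀ v ∈ X, ∀ w ∈ X, ¬ G.Adj v w) ∧ ℓ ≤ X.card) ↔
      (∃ Mstar : Finset (Sym2 (Ag V)),
        IsStable (srAcc G) (srRk ord (Fintype.card V)) Mstar ∧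
        Mstar ∩ PSR V = ∅ ∧
        ((M1SR V ∆ Mstar).card : ℤ) ≤ 8 * (Fintype.card V : ℤ) - 4 * (ℓ : ℤ)) := by
  classical
  constructor
  · rintro ⟨X, hX, hℓ⟩
    refine ⟨Stmt7.Mgen (fun v => if v ∈ X then 1 else 0), ?_, Stmt7.Mgen_avoids _, ?_⟩
    · apply Stmt7.Mgen_stable ord
      intro v w hadj
      by_cases hv : v ∈ X
      · by_cases hw : w ∈ X
        · exact absurd hadj (hX v hv w hw)
        · exact Or.inr (by simp [hw])
      · exact Or.inl (by simp [hv])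
    · have hcard := Stmt7.card_symmdiff (V := V) (fun v => if v ∈ X then 1 else 0)
      have hfe : (Finset.univ.filter
          (fun v => (if v ∈ X then (1 : Fin 3) else 0) = 1)) = X := by
        ext v; by_cases hv : v ∈ X <;> simp [hv]
      rw [hfe] at hcard
      omega
  · rintro ⟨Mstar, hst, hP, hcard⟩
    obtain ⟨c, rfl⟩ := Stmt7.struct hst hP
    refine ⟨Finset.univ.filter (fun v => c v = 1), ?_, ?_⟩
    · intro v hv w hw hadj
      simp only [Finset.mem_filter] at hv hw
      have h1 := hordLt v w hadj
      have h2 := hordLt w v hadj.symm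
      refine hst.2 (aA 1 v) (aA 1 w) ⟨Stmt7.acc_aa G hadj,
        Or.inr ⟨bA 0 v, ?_, ?_⟩, Or.inr ⟨bA 0 w, ?_, ?_⟩⟩
      · rw [Stmt7.mem_Mgen]
        simp [Stmt7.pfun, aA, bA, hv.2, Stmt7.τ]
      · (simp [srRk, aA, bA, rkAB, hv.2]) <;> omega
      · rw [Stmt7.mem_Mgen]
        simp [Stmt7.pfun, aA, bA, hw.2, Stmt7.τ]
      · (simp [srRk, aA, bA, rkAB, hw.2]) <;> omega
    · have hcard2 := Stmt7.card_symmdiff c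
      omega
end

section
/- Let M and M' be two strongly stable matchings in a Stable Marriage with Ties instance that match the same set of agents, and let a be an agent matched in both. If a is indifferent between M(a) and M'(a), then M(a) is indifferent between a and M'(M(a)). If a strictly prefers M(a) to M'(a), then M(a) strictly prefers M'(M(a)) to a. -/
section Defs

variable {U W : Type*}

/-- `u` is unmatched or strictly prefers `w` to its partner (smaller rank = better). -/
def StrPrefU (rkU : U → W → ℕ) (M : Finset (U × W)) (u : U) (w : W) : Prop :=
  ¬ MatchedU M u ∨ ∃ w', (u, w') ∈ M ∧ rkU u w < rkU u w'

/-- `u` is unmatched or weakly prefers `w` to its partner. -/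
def WkPrefU (rkU : U → W → ℕ) (M : Finset (U × W)) (u : U) (w : W) : Prop :=
  ¬ MatchedU M u ∨ ∃ w', (u, w') ∈ M ∧ rkU u w ≤ rkU u w'

def StrPrefW (rkW : W → U → ℕ) (M : Finset (U × W)) (w : W) (u : U) : Prop :=
  ¬ MatchedW M w ∨ ∃ u', (u', w) ∈ M ∧ rkW w u < rkW w u'

def WkPrefW (rkW : W → U → ℕ) (M : Finset (U × W)) (w : W) (u : U) : Prop :=
  ¬ MatchedW M w ∨ ∃ u', (u', w) ∈ M ∧ rkW w u ≤ rkW w u'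

/-- A mutually acceptable pair `(u, w)` blocks `M` under strong stability:
one of the two agents is unmatched or strictly prefers the other to its partner,
and the other is unmatched or weakly prefers the first to its partner. -/
def BBlocksStrong (acc : U → W → Prop) (rkU : U → W → ℕ) (rkW : W → U → ℕ)
    (M : Finset (U × W)) (u : U) (w : W) : Prop :=
  acc u w ∧
  ((StrPrefU rkU M u w ∧ WkPrefW rkW M w u) ∨ (WkPrefU rkU M u w ∧ StrPrefW rkW M w u))

/-- A strongly stable matching. -/
def BStronglyStable (acc : U → W → Prop) (rkU : U → W → ℕ) (rkW : W → U → ℕ)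
    (M : Finset (U × W)) : Prop :=
  BMatching acc M ∧ ∀ u w, ¬ BBlocksStrong acc rkU rkW M u w

end Defs

private lemma cycle_back {α : Type*} [Finite α] (f : α → α) (hf : Function.Injective f)
    (P : α → Prop) (hP : ∀ x, P x → P (f x)) (x : α) (hx : P (f x)) : P x := by
  have hiter : ∀ n, P (f^[n] (f x)) := by
    intro n
    induction n with
    | zero => simpa using hx
    | succ n ih => rw [Function.iterate_succ_apply']; exact hP _ ih
  obtain ⟨i, j, hne, hij0⟩ := Finite.exists_ne_map_eq_of_infinite (fun n : ℕ => f^[n] x)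
  have hij : f^[i] x = f^[j] x := hij0
  have key : ∀ i j : ℕ, i < j → f^[i] x = f^[j] x → P x := by
    intro i j hlt hij
    have h1 : f^[i] (f^[j - i] x) = f^[i] x := by
      rw [← Function.iterate_add_apply, show i + (j - i) = j by omega]
      exact hij.symm
    have h2 : f^[j - i] x = x := hf.iterate i h1
    have h3 : f^[j - i - 1] (f x) = x := by
      have he : j - i - 1 + 1 = j - i := by omega
      calc f^[j - i - 1] (f x) = f^[j - i - 1 + 1] x :=
            (Function.iterate_succ_apply f _ x).symm
        _ = x := by rw [he]; exact h2
    have h4 := hiter (j - i - 1)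
    rwa [h3] at h4
  rcases hne.lt_or_gt with h | h
  · exact key _ _ h hij
  · exact key _ _ h hij.symm

private lemma men_side {U W : Type*}
    (acc : U → W → Prop) (rkU : U → W → ℕ) (rkW : W → U → ℕ)
    (M M' : Finset (U × W))
    (hM : BStronglyStable acc rkU rkW M) (hM' : BStronglyStable acc rkU rkW M')
    (hsameU : ∀ u, MatchedU M u ↔ MatchedU M' u)
    (hsameW : ∀ w, MatchedW M w ↔ MatchedW M' w) :
    ∀ u w w', (u, w) ∈ M → (u, w') ∈ M' →
        (rkU u w = rkU u w' → ∀ u'', (u'', w) ∈ M' → rkW w u = rkW w u'') ∧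
        (rkU u w < rkU u w' → ∀ u'', (u'', w) ∈ M' → rkW w u'' < rkW w u) := by
  classical
  obtain ⟨⟨hMacc, hMu, hMw⟩, hMst⟩ := hM
  obtain ⟨⟨hM'acc, hM'u, hM'w⟩, hM'st⟩ := hM'
  -- if u is acceptable to w and strictly prefers w to its M'-partner, then w
  -- strictly prefers its M'-partner to u (else (u,w) blocks M')
  have strictA : ∀ u w w', acc u w → (u, w') ∈ M' → rkU u w < rkU u w' →
      ∀ u'', (u'', w) ∈ M' → rkW w u'' < rkW w u := by
    intro u w w' hacc hw' hlt u'' hu''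
    by_contra h
    push_neg at h
    exact hM'st u w ⟨hacc, Or.inl ⟨Or.inr ⟨w', hw', hlt⟩, Or.inr ⟨u'', hu'', h⟩⟩⟩
  have wkA : ∀ u w w', acc u w → (u, w') ∈ M' → rkU u w ≤ rkU u w' →
      ∀ u'', (u'', w) ∈ M' → rkW w u'' ≤ rkW w u := by
    intro u w w' hacc hw' hle u'' hu''
    by_contra h
    push_neg at h
    exact hM'st u w ⟨hacc, Or.inr ⟨Or.inr ⟨w', hw', hle⟩, Or.inr ⟨u'', hu'', h⟩⟩⟩
  -- P x : man x strictly prefers his M-partner to his M'-partner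
  set P : U → Prop := fun x => ∃ a b, (x, a) ∈ M ∧ (x, b) ∈ M' ∧ rkU x a < rkU x b with hPdef
  -- if woman a strictly prefers her M-partner x to her M'-partner y, then P y
  have step2 : ∀ (a : W) (x y : U), (x, a) ∈ M → (y, a) ∈ M' → rkW a y < rkW a x → P y := by
    intro a x y hxa hya hlt
    obtain ⟨c, hc⟩ : MatchedU M y := (hsameU y).mpr ⟨a, hya⟩
    have hlt' : rkU y c < rkU y a := by
      by_contra h
      push_neg at h
      exact hMst y a ⟨hM'acc y a hya, Or.inr ⟨Or.inr ⟨c, hc, h⟩, Or.inr ⟨x, hxa, hlt⟩⟩⟩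
    exact ⟨c, a, hc, hya, hlt'⟩
  have stepP : ∀ x a y, P x → (x, a) ∈ M → (y, a) ∈ M' → P y := by
    intro x a y hx hxa hya
    obtain ⟨a₀, b, ha₀, hb, hlt⟩ := hx
    have hE : a₀ = a := hMu x a₀ a ha₀ hxa
    rw [hE] at ha₀ hlt
    exact step2 a x y hxa hya (strictA x a b (hMacc x a hxa) hb hlt y hya)
  intro u w w' huw huw'
  -- chain argument: if w strictly prefers its M'-partner to u, then P u
  have chain : ∀ u'', (u'', w) ∈ M' → rkW w u'' < rkW w u → P u := by
    intro u'' hu'' hlt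
    have hPu'' : P u'' := step2 w u u'' huw hu'' hlt
    set S : Finset U := M.image Prod.fst with hS
    have hmemS : ∀ x : U, x ∈ S ↔ MatchedU M x := by
      intro x
      simp only [hS, Finset.mem_image]
      constructor
      · rintro ⟨⟨a, b⟩, hab, rfl⟩; exact ⟨b, hab⟩
      · rintro ⟨b, hb⟩; exact ⟨(x, b), hb, rfl⟩
    have hex : ∀ x : ↥S, ∃ y : ↥S, ∃ a, (x.1, a) ∈ M ∧ (y.1, a) ∈ M' := by
      rintro ⟨x, hx⟩
      obtain ⟨a, ha⟩ := (hmemS x).1 hx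
      obtain ⟨y, hy⟩ := (hsameW a).1 ⟨x, ha⟩
      have hyS : y ∈ S := (hmemS y).2 ((hsameU y).2 ⟨a, hy⟩)
      exact ⟨⟨y, hyS⟩, a, ha, hy⟩
    choose f af h1 h2 using hex
    have hinj : Function.Injective f := by
      intro x y hxy
      have h2x := h2 x
      rw [hxy] at h2x
      have hae : af x = af y := hM'u (f y).1 (af x) (af y) h2x (h2 y)
      have h1y : (y.1, af x) ∈ M := by rw [hae]; exact h1 y
      exact Subtype.ext (hMw x.1 y.1 (af x) (h1 x) h1y)
    have hPf : ∀ x : ↥S, P x.1 → P (f x).1 := fun x hx => stepP x.1 (af x) (f x).1 hx (h1 x) (h2 x)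
    have huS : u ∈ S := (hmemS u).2 ⟨w, huw⟩
    have hfu : P (f ⟨u, huS⟩).1 := by
      have h1u := h1 ⟨u, huS⟩
      have hae : af ⟨u, huS⟩ = w := hMu u _ w h1u huw
      have h2u := h2 ⟨u, huS⟩
      rw [hae] at h2u
      have : (f ⟨u, huS⟩).1 = u'' := hM'w _ u'' w h2u hu''
      rw [this]
      exact hPu''
    exact cycle_back f hinj (fun x => P x.1) hPf ⟨u, huS⟩ hfu
  constructor
  · intro heq u'' hu''
    have hle1 : rkW w u'' ≤ rkW w u := wkA u w w' (hMacc u w huw) huw' heq.le u'' hu''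
    have hnlt : ¬ rkW w u'' < rkW w u := by
      intro hlt
      obtain ⟨a, b, ha, hb, hlt'⟩ := chain u'' hu'' hlt
      have hE : a = w := hMu u a w ha huw
      subst hE
      have hE' : b = w' := hM'u u b w' hb huw'
      subst hE'
      omega
    omega
  · intro hlt u'' hu''
    exact strictA u w w' (hMacc u w huw) huw' hlt u'' hu''

private def bflip {U W : Type*} (M : Finset (U × W)) : Finset (W × U) :=
  M.map (Equiv.prodComm U W).toEmbedding

private lemma mem_bflip {U W : Type*} {M : Finset (U × W)} {u : U} {w : W} :
    (w, u) ∈ bflip M ↔ (u, w) ∈ M := by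
  simp [bflip, Finset.mem_map_equiv]

private lemma matchedU_bflip {U W : Type*} {M : Finset (U × W)} {w : W} :
    MatchedU (bflip M) w ↔ MatchedW M w :=
  exists_congr fun _ => mem_bflip

private lemma matchedW_bflip {U W : Type*} {M : Finset (U × W)} {u : U} :
    MatchedW (bflip M) u ↔ MatchedU M u :=
  exists_congr fun _ => mem_bflip

private lemma strPrefU_bflip {U W : Type*} {rkW : W → U → ℕ} {M : Finset (U × W)}
    {w : W} {u : U} : StrPrefU rkW (bflip M) w u ↔ StrPrefW rkW M w u :=
  or_congr (not_congr matchedU_bflip)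
    (exists_congr fun _ => and_congr_left fun _ => mem_bflip)

private lemma wkPrefU_bflip {U W : Type*} {rkW : W → U → ℕ} {M : Finset (U × W)}
    {w : W} {u : U} : WkPrefU rkW (bflip M) w u ↔ WkPrefW rkW M w u :=
  or_congr (not_congr matchedU_bflip)
    (exists_congr fun _ => and_congr_left fun _ => mem_bflip)

private lemma strPrefW_bflip {U W : Type*} {rkU : U → W → ℕ} {M : Finset (U × W)}
    {w : W} {u : U} : StrPrefW rkU (bflip M) u w ↔ StrPrefU rkU M u w :=
  or_congr (not_congr matchedW_bflip)
    (exists_congr fun _ => and_congr_left fun _ => mem_bflip)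

private lemma wkPrefW_bflip {U W : Type*} {rkU : U → W → ℕ} {M : Finset (U × W)}
    {w : W} {u : U} : WkPrefW rkU (bflip M) u w ↔ WkPrefU rkU M u w :=
  or_congr (not_congr matchedW_bflip)
    (exists_congr fun _ => and_congr_left fun _ => mem_bflip)

private lemma stable_bflip {U W : Type*} {acc : U → W → Prop} {rkU : U → W → ℕ}
    {rkW : W → U → ℕ} {M : Finset (U × W)} (h : BStronglyStable acc rkU rkW M) :
    BStronglyStable (fun w u => acc u w) rkW rkU (bflip M) := by
  obtain ⟨⟨h1, h2, h3⟩, hst⟩ := h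
  refine ⟨⟨?_, ?_, ?_⟩, ?_⟩
  · intro w u hw; exact h1 u w (mem_bflip.1 hw)
  · intro w u u' hw hw'; exact h3 u u' w (mem_bflip.1 hw) (mem_bflip.1 hw')
  · intro w w' u hw hw'; exact h2 u w w' (mem_bflip.1 hw) (mem_bflip.1 hw')
  · rintro w u ⟨hacc, hb⟩
    apply hst u w
    refine ⟨hacc, ?_⟩
    rcases hb with ⟨hs, hw⟩ | ⟨hw, hs⟩
    · exact Or.inr ⟨wkPrefW_bflip.1 hw, strPrefU_bflip.1 hs⟩
    · exact Or.inl ⟨strPrefW_bflip.1 hs, wkPrefU_bflip.1 hw⟩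

/-- Manlove. Let `M`, `M'` be strongly stable matchings matching the
same agents, and let `a` be an agent matched in both. If `a` is indifferent between
`M(a)` and `M'(a)`, then `M(a)` is indifferent between `a` and `M'(M(a))`; if `a`
strictly prefers `M(a)` to `M'(a)`, then `M(a)` strictly prefers `M'(M(a))` to `a`.
(Stated for agents of both sides.) -/
theorem stmt9 {U W : Type*}
    (acc : U → W → Prop) (rkU : U → W → ℕ) (rkW : W → U → ℕ)
    (M M' : Finset (U × W))
    (hM : BStronglyStable acc rkU rkW M) (hM' : BStronglyStable acc rkU rkW M')
    (hsameU : ∀ u, MatchedU M u ↔ MatchedU M' u)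
    (hsameW : ∀ w, MatchedW M w ↔ MatchedW M' w) :
    (∀ u w w', (u, w) ∈ M → (u, w') ∈ M' →
        (rkU u w = rkU u w' → ∀ u'', (u'', w) ∈ M' → rkW w u = rkW w u'') ∧
        (rkU u w < rkU u w' → ∀ u'', (u'', w) ∈ M' → rkW w u'' < rkW w u)) ∧
    (∀ w u u', (u, w) ∈ M → (u', w) ∈ M' →
        (rkW w u = rkW w u' → ∀ w'', (u, w'') ∈ M' → rkU u w = rkU u w'') ∧
        (rkW w u < rkW w u' → ∀ w'', (u, w'') ∈ M' → rkU u w'' < rkU u w)) := by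
  constructor
  · exact fun u w w' h h' => men_side acc rkU rkW M M' hM hM' hsameU hsameW u w w' h h'
  · intro w u u' h h'
    have key := men_side (fun w u => acc u w) rkW rkU (bflip M) (bflip M')
      (stable_bflip hM) (stable_bflip hM')
      (fun w => matchedU_bflip.trans ((hsameW w).trans matchedU_bflip.symm))
      (fun u => matchedW_bflip.trans ((hsameU u).trans matchedW_bflip.symm))
      w u u' (mem_bflip.2 h) (mem_bflip.2 h')
    exact ⟨fun heq w'' hw'' => key.1 heq w'' (mem_bflip.2 hw''),
           fun hlt w'' hw'' => key.2 hlt w'' (mem_bflip.2 hw'')⟩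
end

section
/- Let M and M' be two strongly stable matchings in a Stable Marriage with Ties instance that match the same set of agents, let e = {m, w} ∈ M' with m matched in M, and suppose m is indifferent between M(m) and w. Let C be the connected component of the symmetric difference M △ M' that contains e. Then every agent incident to C is indifferent between its partner in M and its partner in M', and M △ C is a strongly stable matching containing e in which every matched agent's partner has the same rank as its partner in M. -/
open scoped symmDiff

/- ---------- auxiliary machinery ---------- -/

lemma iterate_cancel_on {α : Type*} (f : α → α) (S : Finset α)
    (hmap : ∀ a ∈ S, f a ∈ S) (hinj : ∀ a ∈ S, ∀ b ∈ S, f a = f b → a = b) :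
    ∀ k, ∀ a ∈ S, ∀ b ∈ S, f^[k] a = f^[k] b → a = b := by
  intro k
  induction k with
  | zero => intro a _ b _ h; simpa using h
  | succ k ih =>
    intro a ha b hb h
    rw [Function.iterate_succ_apply, Function.iterate_succ_apply] at h
    exact hinj a ha b hb (ih (f a) (hmap a ha) (f b) (hmap b hb) h)

lemma exists_pos_iterate_fixed {α : Type*} [DecidableEq α] (f : α → α) (S : Finset α)
    (hmap : ∀ a ∈ S, f a ∈ S) (hinj : ∀ a ∈ S, ∀ b ∈ S, f a = f b → a = b)
    {a : α} (ha : a ∈ S) : ∃ n, 0 < n ∧ f^[n] a = a := by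
  have hiter : ∀ k, f^[k] a ∈ S := by
    intro k
    induction k with
    | zero => simpa using ha
    | succ k ih => rw [Function.iterate_succ_apply']; exact hmap _ ih
  have hcard : S.card < (Finset.range (S.card + 1)).card := by simp
  obtain ⟨i, hi, j, hj, hij, hfij⟩ :=
    Finset.exists_ne_map_eq_of_card_lt_of_maps_to hcard (fun k _ => hiter k)
  have key : ∀ i j, i < j → f^[i] a = f^[j] a → ∃ n, 0 < n ∧ f^[n] a = a := by
    intro i j hlt heq
    refine ⟨j - i, by omega, ?_⟩
    have h2 : f^[i] (f^[j - i] a) = f^[i] a := by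
      rw [← Function.iterate_add_apply]
      have hji : i + (j - i) = j := by omega
      rw [hji, ← heq]
    exact iterate_cancel_on f S hmap hinj i _ (hiter _) a ha h2
  rcases lt_or_gt_of_ne hij with h | h
  · exact key i j h hfij
  · exact key j i h hfij.symm

open Classical in
noncomputable def stepfn {U W : Type*} (M M' : Finset (U × W)) (w' : W) : W :=
  if h : ∃ q ∈ M', (q.1, w') ∈ M then h.choose.2 else w'

lemma stepfn_spec {U W : Type*} {M M' : Finset (U × W)}
    (hMfW : ∀ u u' w, (u, w) ∈ M → (u', w) ∈ M → u = u')
    (hM'fU : ∀ u w w', (u, w) ∈ M' → (u, w') ∈ M' → w = w')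
    {u : U} {w' x : W} (h1 : (u, w') ∈ M) (h2 : (u, x) ∈ M') :
    stepfn M M' w' = x := by
  have h : ∃ q ∈ M', (q.1, w') ∈ M := ⟨(u, x), h2, h1⟩
  rw [stepfn, dif_pos h]
  obtain ⟨hq1, hq2⟩ := h.choose_spec
  have he : h.choose.1 = u := hMfW _ _ _ hq2 h1
  have : (u, h.choose.2) ∈ M' := by rw [← he]; simpa using hq1
  exact hM'fU u _ x this h2

/-- `x` strictly prefers its `M'`-partner (bad). -/
def BadW {U W : Type*} (rkW : W → U → ℕ) (M M' : Finset (U × W)) (x : W) : Prop :=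
  ∃ u₁ u₂, (u₁, x) ∈ M ∧ (u₂, x) ∈ M' ∧ rkW x u₂ < rkW x u₁

/-- `x` strictly prefers its `M`-partner (good). -/
def GoodW {U W : Type*} (rkW : W → U → ℕ) (M M' : Finset (U × W)) (x : W) : Prop :=
  ∃ u₁ u₂, (u₁, x) ∈ M ∧ (u₂, x) ∈ M' ∧ rkW x u₁ < rkW x u₂

open Classical in
/-- Let `M`, `M'` be strongly stable matchings matching the same
agents, let `e = (m, w) ∈ M'` with `m` matched in `M` and indifferent between `M(m)`
and `w`, and let `C` be the connected component of `M △ M'` containing `e`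
(edges linked by sharing an endpoint). Then every agent incident to `C` is
indifferent between its partners in `M` and in `M'`, and `M △ C` is a strongly
stable matching containing `e` that matches the same agents as `M`, each at
the same rank as in `M`. -/
theorem stmt10 {U W : Type*} [DecidableEq U] [DecidableEq W]
    (acc : U → W → Prop) (rkU : U → W → ℕ) (rkW : W → U → ℕ)
    (M M' : Finset (U × W))
    (hM : BStronglyStable acc rkU rkW M) (hM' : BStronglyStable acc rkU rkW M')
    (hsameU : ∀ u, MatchedU M u ↔ MatchedU M' u)
    (hsameW : ∀ w, MatchedW M w ↔ MatchedW M' w)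
    (m : U) (w : W) (he : (m, w) ∈ M')
    (w₀ : W) (hm : (m, w₀) ∈ M)
    (hind : rkU m w₀ = rkU m w)
    (C : Finset (U × W))
    (hC : C = (M ∆ M').filter (fun f =>
        Relation.ReflTransGen
          (fun e₁ e₂ : U × W =>
            (e₁.1 = e₂.1 ∨ e₁.2 = e₂.2) ∧ e₁ ∈ M ∆ M' ∧ e₂ ∈ M ∆ M')
          (m, w) f)) :
    (∀ p ∈ C,
        (∀ w₁ w₂, (p.1, w₁) ∈ M → (p.1, w₂) ∈ M' → rkU p.1 w₁ = rkU p.1 w₂) ∧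
        (∀ u₁ u₂, (u₁, p.2) ∈ M → (u₂, p.2) ∈ M' → rkW p.2 u₁ = rkW p.2 u₂)) ∧
    BStronglyStable acc rkU rkW (M ∆ C) ∧
    (m, w) ∈ M ∆ C ∧
    (∀ u, MatchedU (M ∆ C) u ↔ MatchedU M u) ∧
    (∀ w', MatchedW (M ∆ C) w' ↔ MatchedW M w') ∧
    (∀ u w₁ w₂, (u, w₁) ∈ M ∆ C → (u, w₂) ∈ M → rkU u w₁ = rkU u w₂) ∧
    (∀ w' u₁ u₂, (u₁, w') ∈ M ∆ C → (u₂, w') ∈ M → rkW w' u₁ = rkW w' u₂) := by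
  obtain ⟨⟨hMacc, hMfU, hMfW⟩, hMstab⟩ := hM
  obtain ⟨⟨hM'acc, hM'fU, hM'fW⟩, hM'stab⟩ := hM'
  by_cases hmw : (m, w) ∈ M
  · -- degenerate case : (m,w) ∈ M ∩ M', so C = ∅
    have hww₀ : w = w₀ := hMfU m w w₀ hmw hm
    have hnsd : (m, w) ∉ M ∆ M' := by
      rw [Finset.mem_symmDiff]; push_neg; exact ⟨fun _ => he, fun _ => hmw⟩
    have hCempty : C = ∅ := by
      rw [hC]
      ext p
      simp only [Finset.mem_filter, Finset.notMem_empty, iff_false, not_and]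
      intro hp hreach
      rcases hreach.cases_head with h | ⟨c, hc, _⟩
      · exact hnsd (h ▸ hp)
      · exact hnsd hc.2.1
    have hMC : M ∆ C = M := by rw [hCempty]; simp
    refine ⟨by simp [hCempty], ?_, ?_, ?_, ?_, ?_, ?_⟩
    · rw [hMC]; exact ⟨⟨hMacc, hMfU, hMfW⟩, hMstab⟩
    · rw [hMC]; exact hmw
    · intro u; rw [hMC]
    · intro w'; rw [hMC]
    · intro u w₁ w₂ h1 h2; rw [hMC] at h1; rw [hMfU u w₁ w₂ h1 h2]
    · intro w' u₁ u₂ h1 h2; rw [hMC] at h1; rw [hMfW u₁ u₂ w' h1 h2]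
  · -- main case
    have hwne : w ≠ w₀ := fun h => hmw (h ▸ hm)
    have hmemw : (m, w) ∈ M ∆ M' := Finset.mem_symmDiff.2 (Or.inr ⟨he, hmw⟩)
    set f : W → W := stepfn M M' with hf
    set S : Finset W := M.image Prod.snd with hS
    have hSmem : ∀ x : W, x ∈ S ↔ ∃ u, (u, x) ∈ M := by
      intro x
      constructor
      · intro h
        obtain ⟨p, hp, hpx⟩ := Finset.mem_image.1 h
        exact ⟨p.1, by rwa [← hpx, Prod.mk.eta]⟩
      · rintro ⟨u, hu⟩
        exact Finset.mem_image.2 ⟨(u, x), hu, rfl⟩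
    have hfS : ∀ x ∈ S, ∃ u, (u, x) ∈ M ∧ (u, f x) ∈ M' ∧ f x ∈ S := by
      intro x hx
      obtain ⟨u, hu⟩ := (hSmem x).1 hx
      obtain ⟨y, hy⟩ := (hsameU u).1 ⟨x, hu⟩
      have hfx : f x = y := stepfn_spec hMfW hM'fU hu hy
      obtain ⟨v, hv⟩ := (hsameW y).2 ⟨u, hy⟩
      exact ⟨u, hu, by rwa [hfx], by rw [hfx]; exact (hSmem y).2 ⟨v, hv⟩⟩
    have hmapS : ∀ x ∈ S, f x ∈ S := fun x hx => (hfS x hx).choose_spec.2.2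
    have hinjS : ∀ x ∈ S, ∀ y ∈ S, f x = f y → x = y := by
      intro x hx y hy hxy
      obtain ⟨u₁, h1, h1', _⟩ := hfS x hx
      obtain ⟨u₂, h2, h2', _⟩ := hfS y hy
      rw [hxy] at h1'
      have : u₁ = u₂ := hM'fW u₁ u₂ (f y) h1' h2'
      subst this
      exact hMfU u₁ x y h1 h2
    have hw0S : w₀ ∈ S := (hSmem w₀).2 ⟨m, hm⟩
    have hxS : ∀ k, f^[k] w₀ ∈ S := by
      intro k
      induction k with
      | zero => simpa using hw0S
      | succ k ih => rw [Function.iterate_succ_apply']; exact hmapS _ ih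
    have hxM : ∀ k, ∃ u, (u, f^[k] w₀) ∈ M ∧ (u, f^[k + 1] w₀) ∈ M' := by
      intro k
      obtain ⟨u, h1, h2, _⟩ := hfS _ (hxS k)
      exact ⟨u, h1, by rwa [Function.iterate_succ_apply']⟩
    have hfw0 : f^[1] w₀ = w := by
      simpa using stepfn_spec hMfW hM'fU hm he
    obtain ⟨n, hnpos, hfn⟩ := exists_pos_iterate_fixed f S hmapS hinjS hw0S
    have hmult : ∀ t, f^[n * t] w₀ = w₀ := by
      intro t
      induction t with
      | zero => simp
      | succ t ih => rw [Nat.mul_succ, Function.iterate_add_apply, hfn, ih]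
    have hiter_add : ∀ a b, f^[a + n * b] w₀ = f^[a] w₀ := by
      intro a b; rw [Function.iterate_add_apply, hmult]
    have hsur : ∀ k, ∃ j, f^[j + 1] w₀ = f^[k] w₀ := by
      intro k
      refine ⟨k + n * (k + 1) - 1, ?_⟩
      have hposn : 0 < n * (k + 1) := Nat.mul_pos hnpos (Nat.succ_pos k)
      have h1 : k + n * (k + 1) - 1 + 1 = k + n * (k + 1) := by omega
      rw [h1, hiter_add]
    -- stability consequences
    have hC1 : ∀ u x wM uM, (u, x) ∈ M' → (u, wM) ∈ M → (uM, x) ∈ M →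
        rkU u x ≤ rkU u wM → rkW x u ≤ rkW x uM →
        rkU u x = rkU u wM ∧ rkW x u = rkW x uM := by
      intro u x wM uM hx hwM huM hle1 hle2
      by_contra hcon
      apply hMstab u x
      refine ⟨hM'acc u x hx, ?_⟩
      rcases lt_or_eq_of_le hle1 with hlt1 | heq1
      · exact Or.inl ⟨Or.inr ⟨wM, hwM, hlt1⟩, Or.inr ⟨uM, huM, hle2⟩⟩
      · rcases lt_or_eq_of_le hle2 with hlt2 | heq2
        · exact Or.inr ⟨Or.inr ⟨wM, hwM, le_of_eq heq1⟩, Or.inr ⟨uM, huM, hlt2⟩⟩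
        · exact absurd ⟨heq1, heq2⟩ hcon
    have hC2 : ∀ u x wM' uM', (u, x) ∈ M → (u, wM') ∈ M' → (uM', x) ∈ M' →
        rkU u x ≤ rkU u wM' → rkW x u ≤ rkW x uM' →
        rkU u x = rkU u wM' ∧ rkW x u = rkW x uM' := by
      intro u x wM' uM' hx hwM' huM' hle1 hle2
      by_contra hcon
      apply hM'stab u x
      refine ⟨hMacc u x hx, ?_⟩
      rcases lt_or_eq_of_le hle1 with hlt1 | heq1
      · exact Or.inl ⟨Or.inr ⟨wM', hwM', hlt1⟩, Or.inr ⟨uM', huM', hle2⟩⟩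
      · rcases lt_or_eq_of_le hle2 with hlt2 | heq2
        · exact Or.inr ⟨Or.inr ⟨wM', hwM', le_of_eq heq1⟩, Or.inr ⟨uM', huM', hlt2⟩⟩
        · exact absurd ⟨heq1, heq2⟩ hcon
    -- propagation of strict preferences
    have hBadProp : ∀ x ∈ S, BadW rkW M M' (f x) → BadW rkW M M' x := by
      intro x hx hbad
      obtain ⟨u, huM, huM', _⟩ := hfS x hx
      obtain ⟨v₁, v₂, h1, h2, hlt⟩ := hbad
      have hv2 : v₂ = u := hM'fW v₂ u (f x) h2 huM'
      rw [hv2] at hlt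
      have hlt1 : rkU u x < rkU u (f x) := by
        by_contra hle
        push_neg at hle
        exact absurd ((hC1 u (f x) x v₁ huM' huM h1 hle hlt.le).2) hlt.ne
      obtain ⟨v₄, hv₄⟩ := (hsameW x).1 ((hSmem x).1 hx)
      by_cases hle : rkW x u ≤ rkW x v₄
      · exact absurd ((hC2 u x (f x) v₄ huM huM' hv₄ hlt1.le hle).1) hlt1.ne
      · push_neg at hle
        exact ⟨u, v₄, huM, hv₄, hle⟩
    have hGoodProp : ∀ x ∈ S, GoodW rkW M M' x → GoodW rkW M M' (f x) := by
      intro x hx hgood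
      obtain ⟨u, huM, huM', hfxS⟩ := hfS x hx
      obtain ⟨v₁, v₂, h1, h2, hlt⟩ := hgood
      have hv1 : v₁ = u := hMfW v₁ u x h1 huM
      rw [hv1] at hlt
      have hlt1 : rkU u (f x) < rkU u x := by
        by_contra hle
        push_neg at hle
        exact absurd ((hC2 u x (f x) v₂ huM huM' h2 hle hlt.le).2) hlt.ne
      obtain ⟨t, htM⟩ := (hSmem (f x)).1 hfxS
      by_cases hle : rkW (f x) u ≤ rkW (f x) t
      · exact absurd ((hC1 u (f x) x t huM' huM htM hlt1.le hle).1) hlt1.ne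
      · push_neg at hle
        exact ⟨t, u, htM, huM', hle⟩
    have hBadDown : ∀ d k, BadW rkW M M' (f^[k + d] w₀) → BadW rkW M M' (f^[k] w₀) := by
      intro d
      induction d with
      | zero => intro k h; exact h
      | succ d ih =>
        intro k h
        have h' : BadW rkW M M' (f^[(k + 1) + d] w₀) := by
          have : (k + 1) + d = k + (d + 1) := by omega
          rwa [this]
        have hb := ih (k + 1) h'
        rw [Function.iterate_succ_apply'] at hb
        exact hBadProp _ (hxS k) hb
    have hGoodUp : ∀ k d, GoodW rkW M M' (f^[k] w₀) → GoodW rkW M M' (f^[k + d] w₀) := by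
      intro k d
      induction d with
      | zero => intro h; exact h
      | succ d ih =>
        intro h
        have := hGoodProp _ (hxS (k + d)) (ih h)
        have heq : k + (d + 1) = (k + d) + 1 := by omega
        rw [heq, Function.iterate_succ_apply']
        exact this
    have hnBadw : ¬ BadW rkW M M' (f^[1] w₀) := by
      rw [hfw0]
      rintro ⟨v₁, v₂, h1, h2, hlt⟩
      have hv2 : v₂ = m := hM'fW v₂ m w h2 he
      rw [hv2] at hlt
      exact absurd (hC1 m w w₀ v₁ he hm h1 (le_of_eq hind.symm) hlt.le).2 hlt.ne
    have hnGoodw0 : ¬ GoodW rkW M M' w₀ := by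
      rintro ⟨v₁, v₂, h1, h2, hlt⟩
      have hv1 : v₁ = m := hMfW v₁ m w₀ h1 hm
      rw [hv1] at hlt
      exact absurd (hC2 m w₀ w v₂ hm he h2 (le_of_eq hind) hlt.le).2 hlt.ne
    have hnBad : ∀ k, ¬ BadW rkW M M' (f^[k] w₀) := by
      intro k hbad
      have hposn : 0 < n * (k + 1) := Nat.mul_pos hnpos (Nat.succ_pos k)
      have heq : (1 : ℕ) + (k + n * (k + 1) - 1) = k + n * (k + 1) := by omega
      apply hnBadw
      apply hBadDown (k + n * (k + 1) - 1) 1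
      rw [heq, hiter_add]
      exact hbad
    have hnGood : ∀ k, ¬ GoodW rkW M M' (f^[k] w₀) := by
      intro k hgood
      apply hnGoodw0
      have := hGoodUp k (n * (k + 1) - k) hgood
      have hposn : k + 1 ≤ n * (k + 1) := Nat.le_mul_of_pos_left (k + 1) hnpos
      have heq : k + (n * (k + 1) - k) = n * (k + 1) := by omega
      rwa [heq, hmult] at this
    -- indifference along the orbit
    have hIndW : ∀ k u₁ u₂, (u₁, f^[k] w₀) ∈ M → (u₂, f^[k] w₀) ∈ M' →
        rkW (f^[k] w₀) u₁ = rkW (f^[k] w₀) u₂ := by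
      intro k u₁ u₂ h1 h2
      rcases lt_trichotomy (rkW (f^[k] w₀) u₁) (rkW (f^[k] w₀) u₂) with h | h | h
      · exact absurd ⟨u₁, u₂, h1, h2, h⟩ (hnGood k)
      · exact h
      · exact absurd ⟨u₁, u₂, h1, h2, h⟩ (hnBad k)
    have hIndU : ∀ k u, (u, f^[k] w₀) ∈ M →
        ∀ w₁ w₂, (u, w₁) ∈ M → (u, w₂) ∈ M' → rkU u w₁ = rkU u w₂ := by
      intro k u hu w₁ w₂ h1 h2
      obtain ⟨u', hu'M, hu'M'⟩ := hxM k
      have huu : u' = u := hMfW u' u _ hu'M hu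
      rw [huu] at hu'M'
      have hw₁ : w₁ = f^[k] w₀ := hMfU u w₁ _ h1 hu
      have hw₂ : w₂ = f^[k + 1] w₀ := hM'fU u w₂ _ h2 hu'M'
      subst hw₁; subst hw₂
      rcases lt_trichotomy (rkU u (f^[k] w₀)) (rkU u (f^[k + 1] w₀)) with h | h | h
      · obtain ⟨v, hv⟩ := (hsameW _).1 ((hSmem _).1 (hxS k))
        have hle2 : rkW (f^[k] w₀) u ≤ rkW (f^[k] w₀) v := le_of_eq (hIndW k u v hu hv)
        exact absurd (hC2 u _ _ v hu hu'M' hv h.le hle2).1 h.ne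
      · exact h
      · obtain ⟨t, htM⟩ := (hSmem _).1 (hxS (k + 1))
        by_cases hle : rkW (f^[k + 1] w₀) u ≤ rkW (f^[k + 1] w₀) t
        · exact absurd (hC1 u _ _ t hu'M' hu htM h.le hle).1 h.ne
        · push_neg at hle
          exact absurd ⟨t, u, htM, hu'M', hle⟩ (hnGood (k + 1))
    -- no fixed points on the orbit
    have hnofix : ∀ k, f^[k + 1] w₀ ≠ f^[k] w₀ := by
      intro k h
      have hconst : ∀ d, f^[k + d] w₀ = f^[k] w₀ := by
        intro d
        induction d with
        | zero => rfl
        | succ d ih =>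
          have hkd : k + (d + 1) = (k + d) + 1 := by omega
          rw [hkd, Function.iterate_succ_apply', ih]
          rw [Function.iterate_succ_apply'] at h
          exact h
      have hposn : k + 1 ≤ n * (k + 1) := Nat.le_mul_of_pos_left (k + 1) hnpos
      have hk : k + (n * (k + 1) - k) = n * (k + 1) := by omega
      have hw0k : w₀ = f^[k] w₀ := by
        have := hconst (n * (k + 1) - k)
        rwa [hk, hmult] at this
      have hfin : f^[1] w₀ = w₀ := by
        calc f^[1] w₀ = f^[1] (f^[k] w₀) := by rw [← hw0k]
        _ = f^[1 + k] w₀ := (Function.iterate_add_apply f 1 k w₀).symm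
        _ = f^[k + 1] w₀ := by rw [Nat.add_comm]
        _ = f^[k] w₀ := h
        _ = w₀ := hw0k.symm
      rw [hfw0] at hfin
      exact hwne hfin
    have hMedge : ∀ k u, (u, f^[k] w₀) ∈ M → (u, f^[k + 1] w₀) ∈ M' ∧
        (u, f^[k] w₀) ∉ M' ∧ (u, f^[k + 1] w₀) ∉ M := by
      intro k u hu
      obtain ⟨u', h1, h2⟩ := hxM k
      have huu : u' = u := hMfW u' u _ h1 hu
      rw [huu] at h2
      refine ⟨h2, ?_, ?_⟩
      · intro hmem
        exact hnofix k (hM'fU u _ _ h2 hmem)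
      · intro hmem
        exact hnofix k (hMfU u _ _ hmem hu)
    -- reachability of all orbit edges
    set r : U × W → U × W → Prop := fun e₁ e₂ =>
      (e₁.1 = e₂.1 ∨ e₁.2 = e₂.2) ∧ e₁ ∈ M ∆ M' ∧ e₂ ∈ M ∆ M' with hr
    have hCmem : ∀ p, p ∈ C ↔ p ∈ M ∆ M' ∧ Relation.ReflTransGen r (m, w) p := by
      intro p; rw [hC]; exact Finset.mem_filter
    have hsdM : ∀ k u, (u, f^[k] w₀) ∈ M → (u, f^[k] w₀) ∈ M ∆ M' := by
      intro k u hu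
      exact Finset.mem_symmDiff.2 (Or.inl ⟨hu, (hMedge k u hu).2.1⟩)
    have hsdM' : ∀ k u, (u, f^[k] w₀) ∈ M → (u, f^[k + 1] w₀) ∈ M ∆ M' := by
      intro k u hu
      exact Finset.mem_symmDiff.2 (Or.inr ⟨(hMedge k u hu).1, (hMedge k u hu).2.2⟩)
    have hreach : ∀ k u, (u, f^[k] w₀) ∈ M →
        Relation.ReflTransGen r (m, w) (u, f^[k] w₀) ∧
        Relation.ReflTransGen r (m, w) (u, f^[k + 1] w₀) := by
      intro k
      induction k with
      | zero =>
        intro u hu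
        have hum : m = u := (hMfW u m w₀ (by simpa using hu) hm).symm
        subst hum
        constructor
        · refine Relation.ReflTransGen.single ?_
          exact ⟨Or.inl rfl, hmemw, hsdM 0 m hu⟩
        · have h01 : f^[0 + 1] w₀ = w := hfw0
          rw [h01]
      | succ k ih =>
        intro u hu
        obtain ⟨u', h1, h2⟩ := hxM k
        have hreach2 := (ih u' h1).2
        have hstepA : Relation.ReflTransGen r (m, w) (u, f^[k + 1] w₀) := by
          refine hreach2.tail ?_
          exact ⟨Or.inr rfl, hsdM' k u' h1, hsdM (k + 1) u hu⟩
        refine ⟨hstepA, ?_⟩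
        refine hstepA.tail ?_
        exact ⟨Or.inl rfl, hsdM (k + 1) u hu, hsdM' (k + 1) u hu⟩
    have hedgeC : ∀ k u, (u, f^[k] w₀) ∈ M →
        (u, f^[k] w₀) ∈ C ∧ (u, f^[k + 1] w₀) ∈ C := by
      intro k u hu
      exact ⟨(hCmem _).2 ⟨hsdM k u hu, (hreach k u hu).1⟩,
        (hCmem _).2 ⟨hsdM' k u hu, (hreach k u hu).2⟩⟩
    -- every edge of C lies on the orbit
    have hCsub : ∀ p ∈ C, (∃ k, (p.1, f^[k] w₀) ∈ M) ∧ (∃ k, p.2 = f^[k] w₀) := by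
      have main : ∀ p : U × W, Relation.ReflTransGen r (m, w) p → p ∈ M ∆ M' →
          (∃ k, (p.1, f^[k] w₀) ∈ M) ∧ (∃ k, p.2 = f^[k] w₀) := by
        intro p hp
        induction hp with
        | refl =>
          intro _
          exact ⟨⟨0, by simpa using hm⟩, ⟨1, by rw [hfw0]⟩⟩
        | tail hab hbc ih =>
          rename_i b c
          intro hc
          obtain ⟨⟨k, hk⟩, ⟨k', hk'⟩⟩ := ih hbc.2.1
          have hcM : c ∈ M ∨ ((c.1, c.2) ∈ M' ∧ (c.1, c.2) ∉ M) := by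
            rcases Finset.mem_symmDiff.1 hc with ⟨h₁, _⟩ | ⟨h₁, h₂⟩
            · exact Or.inl h₁
            · exact Or.inr ⟨by simpa using h₁, by simpa using h₂⟩
          rcases hbc.1 with hb1 | hb2
          · -- b.1 = c.1
            have hk₂ : (c.1, f^[k] w₀) ∈ M := hb1 ▸ hk
            refine ⟨⟨k, hk₂⟩, ?_⟩
            rcases hcM with h₁ | ⟨h₁, h₂⟩
            · exact ⟨k, hMfU c.1 c.2 _ (by simpa using h₁) hk₂⟩
            · have hM'c := (hMedge k c.1 hk₂).1
              exact ⟨k + 1, hM'fU c.1 c.2 _ h₁ hM'c⟩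
          · -- b.2 = c.2
            have hc2 : c.2 = f^[k'] w₀ := hb2 ▸ hk'
            refine ⟨?_, ⟨k', hc2⟩⟩
            rcases hcM with h₁ | ⟨h₁, h₂⟩
            · exact ⟨k', by rw [← hc2]; simpa using h₁⟩
            · obtain ⟨j, hj⟩ := hsur k'
              obtain ⟨uj, hj1, hj2⟩ := hxM j
              rw [hj] at hj2
              have : c.1 = uj := hM'fW c.1 uj _ (by rw [hc2] at h₁; exact h₁) hj2
              exact ⟨j, this ▸ hj1⟩
      intro p hp
      obtain ⟨h1, h2⟩ := (hCmem p).1 hp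
      exact main p h2 h1
    -- characterization of M ∆ C edges
    have hAUc : ∀ k u, (u, f^[k] w₀) ∈ M → ∀ y, ((u, y) ∈ M ∆ C ↔ (u, y) ∈ M') := by
      intro k u hu y
      constructor
      · intro hy
        rcases Finset.mem_symmDiff.1 hy with ⟨hyM, hyC⟩ | ⟨hyC, _⟩
        · have : y = f^[k] w₀ := hMfU u y _ hyM hu
          subst this
          exact absurd (hedgeC k u hu).1 hyC
        · have := ((hCmem _).1 hyC).1
          rcases Finset.mem_symmDiff.1 this with ⟨h₁, _⟩ | ⟨h₁, _⟩
          · exact absurd h₁ (fun h => (Finset.mem_symmDiff.1 hy).elim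
              (fun hh => hh.2 hyC) (fun hh => hh.2 h))
          · exact h₁
      · intro hy
        have : y = f^[k + 1] w₀ := hM'fU u y _ hy (hMedge k u hu).1
        subst this
        exact Finset.mem_symmDiff.2 (Or.inr ⟨(hedgeC k u hu).2, (hMedge k u hu).2.2⟩)
    have hAWc : ∀ k v, ((v, f^[k] w₀) ∈ M ∆ C ↔ (v, f^[k] w₀) ∈ M') := by
      intro k v
      obtain ⟨u, huM, _⟩ := hxM k
      constructor
      · intro hy
        rcases Finset.mem_symmDiff.1 hy with ⟨hyM, hyC⟩ | ⟨hyC, hyM⟩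
        · have hvu : v = u := hMfW v u _ hyM huM
          exact absurd (hedgeC k u huM).1 (hvu ▸ hyC)
        · have := ((hCmem _).1 hyC).1
          rcases Finset.mem_symmDiff.1 this with ⟨h₁, _⟩ | ⟨h₁, _⟩
          · exact absurd h₁ hyM
          · exact h₁
      · intro hy
        obtain ⟨j, hj⟩ := hsur k
        obtain ⟨uj, hj1, hj2⟩ := hxM j
        rw [hj] at hj2
        have hvuj : v = uj := hM'fW v uj _ hy hj2
        rw [hvuj, ← hj]
        exact Finset.mem_symmDiff.2 (Or.inr ⟨(hedgeC j uj hj1).2, (hMedge j uj hj1).2.2⟩)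
    have hnAUc : ∀ u, (¬ ∃ k, (u, f^[k] w₀) ∈ M) → ∀ y, ((u, y) ∈ M ∆ C ↔ (u, y) ∈ M) := by
      intro u hu y
      constructor
      · intro hy
        rcases Finset.mem_symmDiff.1 hy with ⟨hyM, _⟩ | ⟨hyC, hyM⟩
        · exact hyM
        · exact absurd (hCsub _ hyC).1 hu
      · intro hy
        refine Finset.mem_symmDiff.2 (Or.inl ⟨hy, fun hyC => ?_⟩)
        exact hu (hCsub _ hyC).1
    have hnAWc : ∀ y, (¬ ∃ k, y = f^[k] w₀) → ∀ v, ((v, y) ∈ M ∆ C ↔ (v, y) ∈ M) := by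
      intro y hy v
      constructor
      · intro h
        rcases Finset.mem_symmDiff.1 h with ⟨hM₁, _⟩ | ⟨hC₁, _⟩
        · exact hM₁
        · exact absurd (hCsub _ hC₁).2 hy
      · intro h
        refine Finset.mem_symmDiff.2 (Or.inl ⟨h, fun hC₁ => ?_⟩)
        exact hy (hCsub _ hC₁).2
    -- rank preservation
    have hrkU' : ∀ u w₁ w₂, (u, w₁) ∈ M ∆ C → (u, w₂) ∈ M → rkU u w₁ = rkU u w₂ := by
      intro u w₁ w₂ h1 h2
      by_cases hA : ∃ k, (u, f^[k] w₀) ∈ M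
      · obtain ⟨k, hk⟩ := hA
        have h1' : (u, w₁) ∈ M' := (hAUc k u hk w₁).1 h1
        exact (hIndU k u hk w₂ w₁ h2 h1').symm
      · have := (hnAUc u hA w₁).1 h1
        rw [hMfU u w₁ w₂ this h2]
    have hrkW' : ∀ y v₁ v₂, (v₁, y) ∈ M ∆ C → (v₂, y) ∈ M → rkW y v₁ = rkW y v₂ := by
      intro y v₁ v₂ h1 h2
      by_cases hA : ∃ k, y = f^[k] w₀
      · obtain ⟨k, hk⟩ := hA
        subst hk
        have h1' := (hAWc k v₁).1 h1
        exact (hIndW k v₂ v₁ h2 h1').symm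
      · have := (hnAWc y hA v₁).1 h1
        rw [hMfW v₁ v₂ y this h2]
    -- matched sets
    have hmatchU : ∀ u, MatchedU (M ∆ C) u ↔ MatchedU M u := by
      intro u
      by_cases hA : ∃ k, (u, f^[k] w₀) ∈ M
      · obtain ⟨k, hk⟩ := hA
        constructor
        · intro _; exact ⟨_, hk⟩
        · intro _
          exact ⟨f^[k + 1] w₀, (hAUc k u hk _).2 (hMedge k u hk).1⟩
      · constructor
        · rintro ⟨y, hy⟩; exact ⟨y, (hnAUc u hA y).1 hy⟩
        · rintro ⟨y, hy⟩; exact ⟨y, (hnAUc u hA y).2 hy⟩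
    have hmatchW : ∀ y, MatchedW (M ∆ C) y ↔ MatchedW M y := by
      intro y
      by_cases hA : ∃ k, y = f^[k] w₀
      · obtain ⟨k, hk⟩ := hA
        subst hk
        constructor
        · intro _
          obtain ⟨u, hu, _⟩ := hxM k
          exact ⟨u, hu⟩
        · intro _
          obtain ⟨v, hv⟩ := (hsameW _).1 ⟨(hxM k).choose, (hxM k).choose_spec.1⟩
          exact ⟨v, (hAWc k v).2 hv⟩
      · constructor
        · rintro ⟨v, hv⟩; exact ⟨v, (hnAWc y hA v).1 hv⟩
        · rintro ⟨v, hv⟩; exact ⟨v, (hnAWc y hA v).2 hv⟩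
    -- M ∆ C is a matching
    have hsubMM' : ∀ p : U × W, p ∈ M ∆ C → p ∈ M ∨ p ∈ M' := by
      intro p hp
      rcases Finset.mem_symmDiff.1 hp with ⟨h₁, _⟩ | ⟨h₁, h₂⟩
      · exact Or.inl h₁
      · rcases Finset.mem_symmDiff.1 ((hCmem p).1 h₁).1 with ⟨hh, _⟩ | ⟨hh, _⟩
        · exact absurd hh h₂
        · exact Or.inr hh
    have hmatching : BMatching acc (M ∆ C) := by
      refine ⟨?_, ?_, ?_⟩
      · intro u y h
        rcases hsubMM' (u, y) h with h₁ | h₁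
        · exact hMacc u y h₁
        · exact hM'acc u y h₁
      · intro u y y' h h'
        by_cases hA : ∃ k, (u, f^[k] w₀) ∈ M
        · obtain ⟨k, hk⟩ := hA
          exact hM'fU u y y' ((hAUc k u hk y).1 h) ((hAUc k u hk y').1 h')
        · exact hMfU u y y' ((hnAUc u hA y).1 h) ((hnAUc u hA y').1 h')
      · intro v v' y h h'
        by_cases hA : ∃ k, y = f^[k] w₀
        · obtain ⟨k, hk⟩ := hA
          subst hk
          exact hM'fW v v' _ ((hAWc k v).1 h) ((hAWc k v').1 h')
        · exact hMfW v v' y ((hnAWc y hA v).1 h) ((hnAWc y hA v').1 h')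
    -- strong stability of M ∆ C
    have hstable : ∀ u y, ¬ BBlocksStrong acc rkU rkW (M ∆ C) u y := by
      intro u y hblock
      obtain ⟨hacc, hrest⟩ := hblock
      have tS_U : StrPrefU rkU (M ∆ C) u y → StrPrefU rkU M u y := by
        rintro (h | ⟨w', hw', hlt⟩)
        · exact Or.inl (fun hmu => h ((hmatchU u).2 hmu))
        · obtain ⟨w₂, hw₂⟩ := (hmatchU u).1 ⟨w', hw'⟩
          exact Or.inr ⟨w₂, hw₂, by rwa [← hrkU' u w' w₂ hw' hw₂]⟩
      have tW_U : WkPrefU rkU (M ∆ C) u y → WkPrefU rkU M u y := by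
        rintro (h | ⟨w', hw', hle⟩)
        · exact Or.inl (fun hmu => h ((hmatchU u).2 hmu))
        · obtain ⟨w₂, hw₂⟩ := (hmatchU u).1 ⟨w', hw'⟩
          exact Or.inr ⟨w₂, hw₂, by rwa [← hrkU' u w' w₂ hw' hw₂]⟩
      have tS_W : StrPrefW rkW (M ∆ C) y u → StrPrefW rkW M y u := by
        rintro (h | ⟨u', hu', hlt⟩)
        · exact Or.inl (fun hmu => h ((hmatchW y).2 hmu))
        · obtain ⟨u₂, hu₂⟩ := (hmatchW y).1 ⟨u', hu'⟩
          exact Or.inr ⟨u₂, hu₂, by rwa [← hrkW' y u' u₂ hu' hu₂]⟩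
      have tW_W : WkPrefW rkW (M ∆ C) y u → WkPrefW rkW M y u := by
        rintro (h | ⟨u', hu', hle⟩)
        · exact Or.inl (fun hmu => h ((hmatchW y).2 hmu))
        · obtain ⟨u₂, hu₂⟩ := (hmatchW y).1 ⟨u', hu'⟩
          exact Or.inr ⟨u₂, hu₂, by rwa [← hrkW' y u' u₂ hu' hu₂]⟩
      apply hMstab u y
      refine ⟨hacc, ?_⟩
      rcases hrest with ⟨h1, h2⟩ | ⟨h1, h2⟩
      · exact Or.inl ⟨tS_U h1, tW_W h2⟩
      · exact Or.inr ⟨tW_U h1, tS_W h2⟩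
    -- assemble
    refine ⟨?_, ⟨hmatching, hstable⟩, ?_, hmatchU, hmatchW, hrkU', hrkW'⟩
    · intro p hp
      obtain ⟨⟨k, hk⟩, ⟨k', hk'⟩⟩ := hCsub p hp
      refine ⟨fun w₁ w₂ h1 h2 => hIndU k p.1 hk w₁ w₂ h1 h2, fun u₁ u₂ h1 h2 => ?_⟩
      rw [hk'] at h1 h2 ⊢
      exact hIndW k' u₁ u₂ h1 h2
    · have h0 : (m, f^[0] w₀) ∈ M := by simpa using hm
      exact (hAUc 0 m h0 w).2 he
end

section
/- Consider a Strongly Stable Roommates with Ties instance in which every strongly stable matching is complete, and let 𝓜 be an equivalence class of strongly stable matchings. Then a complete matching N is a strongly stable matching belonging to 𝓜 if and only if N is a perfect matching of the graph G^𝓜. -/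
section SRDefs

variable {A : Type*}

/-- A matching is complete if every agent is matched. -/
def IsCompleteM (M : Finset (Sym2 A)) : Prop := ∀ a : A, Matched M a

/-- `a` is unmatched or strictly prefers `b` to its partner (smaller rank = better). -/
def StPref (rk : A → A → ℕ) (M : Finset (Sym2 A)) (a b : A) : Prop :=
  ¬ Matched M a ∨ ∃ c, s(a, c) ∈ M ∧ rk a b < rk a c

/-- `a` is unmatched or weakly prefers `b` to its partner. -/
def WkPref (rk : A → A → ℕ) (M : Finset (Sym2 A)) (a b : A) : Prop :=
  ¬ Matched M a ∨ ∃ c, s(a, c) ∈ M ∧ rk a b ≤ rk a c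

/-- A pair `{a, b}` of acceptable agents blocks `M` under strong stability:
one of the two agents is unmatched or strictly prefers the other to its partner,
and the other is unmatched or weakly prefers the first to its partner. -/
def BlocksStrong (acc : A → A → Prop) (rk : A → A → ℕ) (M : Finset (Sym2 A)) (a b : A) : Prop :=
  acc a b ∧
  ((StPref rk M a b ∧ WkPref rk M b a) ∨ (WkPref rk M a b ∧ StPref rk M b a))

/-- A strongly stable matching. -/
def IsStronglyStable (acc : A → A → Prop) (rk : A → A → ℕ) (M : Finset (Sym2 A)) : Prop :=
  IsSRMatching acc M ∧ ∀ a b, ¬ BlocksStrong acc rk M a b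

/-- Two (complete strongly stable) matchings are equivalent if every agent has
the same rank for its partner in both; `REquiv rk M N` expresses this by comparing
the ranks of the partners of each agent in `M` and in `N`. -/
def REquiv (rk : A → A → ℕ) (M N : Finset (Sym2 A)) : Prop :=
  ∀ a b c : A, s(a, b) ∈ M → s(a, c) ∈ N → rk a b = rk a c

end SRDefs

/-- In a Strongly SR with Ties instance in which every strongly
stable matching is complete, a complete matching `N` is a strongly stable matching
belonging to the equivalence class `𝓜` of the strongly stable matching `M₀` iff
`N` is a perfect matching of the graph `G^𝓜` (whose edges are the mutually
acceptable pairs in which both agents get exactly their rank in `𝓜`). -/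
theorem stmt11 {A : Type*} [DecidableEq A]
    (acc : A → A → Prop)
    (hirr : ∀ a, ¬ acc a a)
    (hsym : ∀ a b, acc a b → acc b a)
    (rk : A → A → ℕ)
    (hcomplete : ∀ M, IsStronglyStable acc rk M → IsCompleteM M)
    (M₀ : Finset (Sym2 A)) (hM₀ : IsStronglyStable acc rk M₀)
    (N : Finset (Sym2 A)) (hN : IsSRMatching acc N) (hNc : IsCompleteM N) :
    (IsStronglyStable acc rk N ∧ REquiv rk M₀ N) ↔
      (∀ a b : A, s(a, b) ∈ N →
        acc a b ∧ (∀ c, s(a, c) ∈ M₀ → rk a b = rk a c) ∧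
        (∀ c, s(b, c) ∈ M₀ → rk b a = rk b c)) := by
  constructor
  · rintro ⟨hNs, hEq⟩ a b hab
    have hba : s(b, a) ∈ N := by rwa [Sym2.eq_swap] at hab
    exact ⟨hN.1 a b hab, fun c hc => (hEq a c b hc hab).symm,
      fun c hc => (hEq b c a hc hba).symm⟩
  · intro H
    have hM₀c : IsCompleteM M₀ := hcomplete M₀ hM₀
    have hEq : REquiv rk M₀ N := fun a b c hb hc => ((H a c hc).2.1 b hb).symm
    have trans_st : ∀ x y, StPref rk N x y → StPref rk M₀ x y := by
      intro x y hst
      obtain ⟨c, hcN, hlt⟩ := hst.resolve_left (not_not_intro (hNc x))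
      obtain ⟨m, hmM⟩ := hM₀c x
      exact Or.inr ⟨m, hmM, ((H x c hcN).2.1 m hmM) ▸ hlt⟩
    have trans_wk : ∀ x y, WkPref rk N x y → WkPref rk M₀ x y := by
      intro x y hst
      obtain ⟨c, hcN, hle⟩ := hst.resolve_left (not_not_intro (hNc x))
      obtain ⟨m, hmM⟩ := hM₀c x
      exact Or.inr ⟨m, hmM, ((H x c hcN).2.1 m hmM) ▸ hle⟩
    refine ⟨⟨hN, ?_⟩, hEq⟩
    rintro a b ⟨hacc, hcase⟩
    apply hM₀.2 a b
    refine ⟨hacc, ?_⟩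
    rcases hcase with ⟨h1, h2⟩ | ⟨h1, h2⟩
    · exact Or.inl ⟨trans_st a b h1, trans_wk b a h2⟩
    · exact Or.inr ⟨trans_wk a b h1, trans_st b a h2⟩
end

section
/- Consider a Strongly Stable Roommates with Ties instance in which every strongly stable matching is complete. Let 𝓜 and 𝓜' be two equivalence classes of strongly stable matchings, let M ∈ 𝓜 and M' ∈ 𝓜', and suppose there is an agent a* with M(a*) indifferent to M'(a*) in the preferences of a*. Let A˜ := {a ∈ A : a is indifferent between M(a) and M'(a)}. Then every strongly stable matching in 𝓜 and every strongly stable matching in 𝓜' matches every agent of A˜ to another agent of A˜ (i.e., induces a complete matching on A˜). -/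
private lemma sym2_mem_finite {A : Type*} (z : Sym2 A) : {x : A | x ∈ z}.Finite := by
  induction z using Sym2.ind with
  | _ u v =>
    have h : {x : A | x ∈ s(u, v)} = {u, v} := by
      ext x; simp [Sym2.mem_iff]
    rw [h]
    exact (Set.finite_singleton v).insert u

lemma keyLemma {A : Type*}
    (acc : A → A → Prop) (rk : A → A → ℕ)
    (N M' : Finset (Sym2 A))
    (hN : IsStronglyStable acc rk N) (hM' : IsStronglyStable acc rk M')
    (hcN : IsCompleteM N) (hcM' : IsCompleteM M')
    {a b c d : A}
    (hab : s(a, b) ∈ N) (hac : s(a, c) ∈ M') (hbd : s(b, d) ∈ M')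
    (heq : rk a b = rk a c) : rk b a = rk b d := by
  classical
  have hfinA : Finite A := by
    have h1 : (Set.univ : Set A) ⊆ ⋃ z ∈ (N : Set (Sym2 A)), {x : A | x ∈ z} := by
      intro x _
      obtain ⟨y, hy⟩ := hcN x
      exact Set.mem_biUnion (Finset.mem_coe.mpr hy) (by simp)
    have h2 : (⋃ z ∈ (N : Set (Sym2 A)), {x : A | x ∈ z}).Finite :=
      Set.Finite.biUnion N.finite_toSet (fun z _ => sym2_mem_finite z)
    exact Set.finite_univ_iff.mp (h2.subset h1)
  set pN : A → A := fun x => (hcN x).choose with hpNdef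
  have hpN : ∀ x, s(x, pN x) ∈ N := fun x => (hcN x).choose_spec
  set pM : A → A := fun x => (hcM' x).choose with hpMdef
  have hpM : ∀ x, s(x, pM x) ∈ M' := fun x => (hcM' x).choose_spec
  have uN : ∀ x y, s(x, y) ∈ N → pN x = y := fun x y h => hN.1.2 x _ y (hpN x) h
  have uM : ∀ x y, s(x, y) ∈ M' → pM x = y := fun x y h => hM'.1.2 x _ y (hpM x) h
  have iN : ∀ x, pN (pN x) = x := fun x => uN (pN x) x (by rw [Sym2.eq_swap]; exact hpN x)
  have iM : ∀ x, pM (pM x) = x := fun x => uM (pM x) x (by rw [Sym2.eq_swap]; exact hpM x)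
  have hba : pN b = a := uN b a (by rw [Sym2.eq_swap]; exact hab)
  have hbd' : pM b = d := uM b d hbd
  have hac' : pM a = c := uM a c hac
  have stepPQ : ∀ x, rk x (pM x) < rk x (pN x) → rk (pM x) (pN (pM x)) < rk (pM x) x := by
    intro x hx
    by_contra h
    push_neg at h
    exact hN.2 x (pM x) ⟨hM'.1.1 x (pM x) (hpM x),
      Or.inl ⟨Or.inr ⟨pN x, hpN x, hx⟩, Or.inr ⟨pN (pM x), hpN (pM x), h⟩⟩⟩
  have stepQP : ∀ x, rk x (pN x) < rk x (pM x) → rk (pN x) (pM (pN x)) < rk (pN x) x := by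
    intro x hx
    by_contra h
    push_neg at h
    exact hM'.2 x (pN x) ⟨hN.1.1 x (pN x) (hpN x),
      Or.inl ⟨Or.inr ⟨pM x, hpM x, hx⟩, Or.inr ⟨pM (pN x), hpM (pN x), h⟩⟩⟩
  have hnQ : ¬ rk b a < rk b d := by
    intro hQ
    have h1 : rk b (pN b) < rk b (pM b) := by rw [hba, hbd']; exact hQ
    have h2 := stepQP b h1
    rw [hba, hac'] at h2
    omega
  have hnP : ¬ rk b d < rk b a := by
    intro hP0
    set g : A → A := fun x => pN (pM x) with hg
    have hPb : rk b (pM b) < rk b (pN b) := by rw [hba, hbd']; exact hP0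
    have inv : ∀ n, rk (g^[n] b) (pM (g^[n] b)) < rk (g^[n] b) (pN (g^[n] b)) := by
      intro n
      induction n with
      | zero => simpa using hPb
      | succ m ih =>
        set x := g^[m] b with hxdef
        have hq := stepPQ x ih
        have hq' : rk (pM x) (pN (pM x)) < rk (pM x) (pM (pM x)) := by
          rw [iM]; exact hq
        have h2 := stepQP (pM x) hq'
        rw [Function.iterate_succ_apply']
        have h3 : pN (g x) = pM x := by simp only [hg]; exact iN (pM x)
        show rk (g x) (pM (g x)) < rk (g x) (pN (g x))
        rw [h3]
        exact h2
    have hginj : Function.Injective g := by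
      have hli : Function.LeftInverse (fun x => pM (pN x)) g := by
        intro x
        simp only [hg]
        rw [iN, iM]
      exact hli.injective
    obtain ⟨i, j, hij, hfe⟩ := Finite.exists_ne_map_eq_of_infinite (fun n : ℕ => g^[n] b)
    have hcyc : ∃ k, 0 < k ∧ g^[k] b = b := by
      have key2 : ∀ i j : ℕ, i < j → g^[i] b = g^[j] b → ∃ k, 0 < k ∧ g^[k] b = b := by
        intro i j hlt he
        refine ⟨j - i, by omega, ?_⟩
        have h5 : g^[i] (g^[j - i] b) = g^[i] b := by
          rw [← Function.iterate_add_apply, show i + (j - i) = j by omega]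
          exact he.symm
        exact (hginj.iterate i) h5
      rcases lt_or_gt_of_ne hij with h | h
      · exact key2 i j h hfe
      · exact key2 j i h hfe.symm
    obtain ⟨k, hk, hgk⟩ := hcyc
    obtain ⟨m, rfl⟩ : ∃ m, k = m + 1 := ⟨k - 1, by omega⟩
    set x := g^[m] b with hxdef
    have hq := stepPQ x (inv m)
    have hgx : pN (pM x) = b := by
      have h6 : g^[m + 1] b = b := hgk
      rw [Function.iterate_succ_apply'] at h6
      simpa [hg] using h6
    have hpMx : pM x = a := by
      have h7 := congrArg pN hgx
      rw [iN] at h7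
      rw [h7, hba]
    have hxc : x = c := by rw [← iM x, hpMx, hac']
    rw [hgx, hpMx, hxc] at hq
    omega
  omega

/-- Let `M ∈ 𝓜` and `M' ∈ 𝓜'` be strongly stable matchings
(all strongly stable matchings being complete), with an agent `a*` indifferent
between `M(a*)` and `M'(a*)`, and let `A˜` be the set of agents indifferent between
their partners in `M` and `M'`. Then every strongly stable matching in `𝓜` or `𝓜'`
(i.e., equivalent to `M` or to `M'`) induces a complete matching on `A˜`. -/
theorem stmt12 {A : Type*} [DecidableEq A]
    (acc : A → A → Prop)
    (hirr : ∀ a, ¬ acc a a)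
    (hsym : ∀ a b, acc a b → acc b a)
    (rk : A → A → ℕ)
    (hcomplete : ∀ M, IsStronglyStable acc rk M → IsCompleteM M)
    (M M' : Finset (Sym2 A))
    (hM : IsStronglyStable acc rk M) (hM' : IsStronglyStable acc rk M')
    (astar : A)
    (hstar : ∃ b c, s(astar, b) ∈ M ∧ s(astar, c) ∈ M' ∧ rk astar b = rk astar c)
    (Atil : Set A)
    (hAtil : Atil = {a | ∃ b c, s(a, b) ∈ M ∧ s(a, c) ∈ M' ∧ rk a b = rk a c}) :
    ∀ N, IsStronglyStable acc rk N → (REquiv rk M N ∨ REquiv rk M' N) →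
      ∀ a ∈ Atil, (∀ b, s(a, b) ∈ N → b ∈ Atil) ∧ ∃ b ∈ Atil, s(a, b) ∈ N := by
  intro N hNst hequiv a ha
  have hcM := hcomplete M hM
  have hcM' := hcomplete M' hM'
  have hcN := hcomplete N hNst
  subst hAtil
  obtain ⟨b0, c0, hb0, hc0, heq0⟩ := ha
  have main : ∀ x, s(a, x) ∈ N →
      x ∈ {a | ∃ b c, s(a, b) ∈ M ∧ s(a, c) ∈ M' ∧ rk a b = rk a c} := by
    intro x hx
    obtain ⟨y, hy⟩ := hcM x
    obtain ⟨z, hz⟩ := hcM' x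
    refine ⟨y, z, hy, hz, ?_⟩
    rcases hequiv with hE | hE
    · have h1 : rk a b0 = rk a x := hE a b0 x hb0 hx
      have h2 : rk a x = rk a c0 := by omega
      have h3 : rk x a = rk x z := keyLemma acc rk N M' hNst hM' hcN hcM' hx hc0 hz h2
      have h4 : rk x y = rk x a := hE x y a hy (by rw [Sym2.eq_swap]; exact hx)
      omega
    · have h1 : rk a c0 = rk a x := hE a c0 x hc0 hx
      have h2 : rk a x = rk a b0 := by omega
      have h3 : rk x a = rk x y := keyLemma acc rk N M hNst hM hcN hcM hx hb0 hy h2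
      have h4 : rk x z = rk x a := hE x z a hz (by rw [Sym2.eq_swap]; exact hx)
      omega
  obtain ⟨x, hx⟩ := hcN a
  exact ⟨main, ⟨x, main x hx, hx⟩⟩
end

section
/- Consider a Strongly Stable Roommates with Ties instance in which every strongly stable matching is complete, together with a set Q of forced pairs. Let 𝓜 and 𝓜' be two equivalence classes of strongly stable matchings, let M ∈ 𝓜 and M' ∈ 𝓜', and suppose there is an agent a* with M(a*) indifferent to M'(a*). Let A˜ := {a ∈ A : a is indifferent between M(a) and M'(a)}. If F is a minimal set of pairs such that every matching from 𝓜 containing all pairs of Q contains at least one pair from F, then F ∩ E(G^𝓜[A˜]) or F ∖ E(G^𝓜[A˜]) is also a minimal set of pairs such that every matching from 𝓜 containing all pairs of Q contains at least one pair from it (where E(G^𝓜[A˜]) denotes the edges of G^𝓜 with both endpoints in A˜). -/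
section Helpers

variable {A : Type*}

lemma sym2_mem_swap {N : Finset (Sym2 A)} {a b : A} (h : s(a, b) ∈ N) : s(b, a) ∈ N := by
  rwa [Sym2.eq_swap] at h

lemma finite_of_completeM {M : Finset (Sym2 A)} (cM : IsCompleteM M) : Finite A := by
  rw [← Set.finite_univ_iff]
  have h1 : (Set.univ : Set A) ⊆ ⋃ e ∈ (M : Set (Sym2 A)), {x | x ∈ e} := by
    intro a _
    obtain ⟨b, hb⟩ := cM a
    exact Set.mem_biUnion hb (Sym2.mem_mk_left a b)
  refine Set.Finite.subset (Set.Finite.biUnion M.finite_toSet ?_) h1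
  intro e _
  induction e using Sym2.ind with
  | _ x y =>
    have h2 : {z | z ∈ s(x, y)} = ({x, y} : Set A) := by
      ext z; simp [Sym2.mem_iff]
    rw [h2]
    exact (Set.finite_singleton y).insert x

lemma no_block (acc : A → A → Prop) (rk : A → A → ℕ) {X : Finset (Sym2 A)}
    (hX : IsStronglyStable acc rk X) {a b pa pb : A}
    (hacc : acc a b) (hpa : s(a, pa) ∈ X) (hpb : s(b, pb) ∈ X)
    (h1 : rk a b < rk a pa) (h2 : rk b a ≤ rk b pb) : False :=
  hX.2 a b ⟨hacc, Or.inl ⟨Or.inr ⟨pa, hpa, h1⟩, Or.inr ⟨pb, hpb, h2⟩⟩⟩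

/-- Key lemma: for `N` in the equivalence class of `M`, edges of `N` do not cross
the boundary of the set of agents indifferent between `M` and `M'`. -/
lemma cross_lemma (acc : A → A → Prop) (rk : A → A → ℕ)
    (M M' N : Finset (Sym2 A))
    (hM : IsStronglyStable acc rk M) (hM' : IsStronglyStable acc rk M')
    (hN : IsStronglyStable acc rk N)
    (cM : IsCompleteM M) (cM' : IsCompleteM M') (cN : IsCompleteM N)
    (hEq : REquiv rk M N)
    (a b : A) (hab : s(a, b) ∈ N)
    (ha : ∃ b' c', s(a, b') ∈ M ∧ s(a, c') ∈ M' ∧ rk a b' = rk a c') :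
    ∃ b' c', s(b, b') ∈ M ∧ s(b, c') ∈ M' ∧ rk b b' = rk b c' := by
  classical
  have hfin : Finite A := finite_of_completeM cM
  choose m hm using cM
  choose m' hm' using cM'
  choose n hn using cN
  have uM : ∀ {x y : A}, s(x, y) ∈ M → y = m x := fun {x y} h => hM.1.2 x y (m x) h (hm x)
  have uM' : ∀ {x y : A}, s(x, y) ∈ M' → y = m' x := fun {x y} h => hM'.1.2 x y (m' x) h (hm' x)
  have uN : ∀ {x y : A}, s(x, y) ∈ N → y = n x := fun {x y} h => hN.1.2 x y (n x) h (hn x)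
  have invM' : ∀ x, m' (m' x) = x := fun x => (uM' (sym2_mem_swap (hm' x))).symm
  have invN : ∀ x, n (n x) = x := fun x => (uN (sym2_mem_swap (hn x))).symm
  have hnb : n b = a := (uN (sym2_mem_swap hab)).symm
  have rEq : ∀ x, rk x (m x) = rk x (n x) := fun x => hEq x (m x) (n x) (hm x) (hn x)
  obtain ⟨b', c', hb', hc', hrk⟩ := ha
  have haEq : rk a (m a) = rk a (m' a) := by rwa [uM hb', uM' hc'] at hrk
  refine ⟨m b, m' b, hm b, hm' b, ?_⟩
  by_contra hne
  have hba : rk b a = rk b (m b) := by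
    have := rEq b; rw [hnb] at this; omega
  have hanb : rk a b = rk a (m' a) := by
    have h1 := rEq a; rw [(uN hab).symm] at h1; omega
  rcases lt_or_gt_of_ne hne with hlt | hgt
  · -- rk b (m b) < rk b (m' b) : pair (b, a) blocks M'
    exact no_block acc rk hM' (hN.1.1 b a (sym2_mem_swap hab)) (hm' b) (hm' a)
      (by omega) (le_of_eq hanb)
  · -- rk b (m' b) < rk b (m b) : alternating cycle argument
    have step : ∀ z, rk z (m' z) < rk z (m z) →
        rk (m' z) (m (m' z)) < rk (m' z) (m' (m' z)) ∧
        rk (n (m' z)) (m' (n (m' z))) < rk (n (m' z)) (m (n (m' z))) := by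
      intro z hz
      set y := m' z with hy
      have hyz : m' y = z := invM' z
      have h1 : rk y (m y) < rk y (m' y) := by
        by_contra h
        push_neg at h
        refine no_block acc rk hN (hM'.1.1 z y (hm' z)) (hn z) (hn y) ?_ ?_
        · calc rk z y = rk z (m' z) := rfl
            _ < rk z (m z) := hz
            _ = rk z (n z) := rEq z
        · calc rk y z = rk y (m' y) := by rw [hyz]
            _ ≤ rk y (m y) := h
            _ = rk y (n y) := rEq y
      have h2 : rk (n y) (m' (n y)) < rk (n y) (m (n y)) := by
        by_contra h
        push_neg at h
        set w := n y with hw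
        have hwy : n w = y := invN y
        refine no_block acc rk hM' (hN.1.1 y w (hn y)) (hm' y) (hm' w) ?_ ?_
        · calc rk y w = rk y (n y) := rfl
            _ = rk y (m y) := (rEq y).symm
            _ < rk y (m' y) := h1
        · calc rk w y = rk w (n w) := by rw [hwy]
            _ = rk w (m w) := (rEq w).symm
            _ ≤ rk w (m' w) := h
      exact ⟨h1, h2⟩
    set f : A → A := fun z => n (m' z) with hf
    have hSiter : ∀ k, rk (f^[k] b) (m' (f^[k] b)) < rk (f^[k] b) (m (f^[k] b)) := by
      intro k
      induction k with
      | zero => simpa using hgt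
      | succ k ih =>
        rw [Function.iterate_succ_apply']
        exact (step _ ih).2
    have hinj : Function.Injective f := by
      intro x y hxy
      have h1 : n (f x) = n (f y) := congrArg n hxy
      simp only [hf, invN] at h1
      have h2 : m' (m' x) = m' (m' y) := congrArg m' h1
      rwa [invM', invM'] at h2
    obtain ⟨i, j, hij, heq⟩ : ∃ i j : ℕ, i < j ∧ f^[i] b = f^[j] b := by
      obtain ⟨i, j, hne', heq⟩ := Finite.exists_ne_map_eq_of_infinite (fun k : ℕ => f^[k] b)
      rcases hne'.lt_or_gt with h | h
      · exact ⟨i, j, h, heq⟩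
      · exact ⟨j, i, h, heq.symm⟩
    have hcancel : f^[j - i] b = b := by
      have h3 : f^[i] (f^[j - i] b) = f^[i] b := by
        rw [← Function.iterate_add_apply]
        have hji : i + (j - i) = j := by omega
        rw [hji]
        exact heq.symm
      exact hinj.iterate i h3
    obtain ⟨k', hk'⟩ : ∃ k', j - i = k' + 1 := ⟨j - i - 1, by omega⟩
    have hfb : f (f^[k'] b) = b := by
      have h5 : f^[k' + 1] b = b := by rw [← hk']; exact hcancel
      rwa [Function.iterate_succ_apply'] at h5
    have hmz : m' (f^[k'] b) = a := by
      have h4 : n (f (f^[k'] b)) = n b := congrArg n hfb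
      simp only [hf, invN] at h4
      rw [h4, hnb]
    have hfin2 := (step _ (hSiter k')).1
    rw [hmz] at hfin2
    omega

end Helpers

/-- Setting of Statement 12, together with forced pairs `Q`.
If `F` is a minimal set of pairs covering all matchings of `𝓜` (the class of `M`)
that contain all pairs of `Q`, then `F ∩ E(G^𝓜[A˜])` or `F ∖ E(G^𝓜[A˜])` is also
such a minimal set. -/
theorem stmt13 {A : Type*} [DecidableEq A]
    (acc : A → A → Prop)
    (hirr : ∀ a, ¬ acc a a)
    (hsym : ∀ a b, acc a b → acc b a)
    (rk : A → A → ℕ)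
    (hcomplete : ∀ M, IsStronglyStable acc rk M → IsCompleteM M)
    (Q : Finset (Sym2 A))
    (M M' : Finset (Sym2 A))
    (hM : IsStronglyStable acc rk M) (hM' : IsStronglyStable acc rk M')
    (astar : A)
    (hstar : ∃ b c, s(astar, b) ∈ M ∧ s(astar, c) ∈ M' ∧ rk astar b = rk astar c)
    (Atil : Set A)
    (hAtil : Atil = {a | ∃ b c, s(a, b) ∈ M ∧ s(a, c) ∈ M' ∧ rk a b = rk a c})
    -- `EG e` says that `e` is an edge of `G^𝓜` with both endpoints in `A˜`
    (EG : Sym2 A → Prop)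
    (hEG : ∀ e, EG e ↔ ∃ a b, e = s(a, b) ∧ a ∈ Atil ∧ b ∈ Atil ∧ acc a b ∧
        (∀ c, s(a, c) ∈ M → rk a b = rk a c) ∧ (∀ c, s(b, c) ∈ M → rk b a = rk b c))
    -- `Covers F'` says that every matching of `𝓜` containing all pairs of `Q`
    -- contains at least one pair of `F'`
    (Covers : Finset (Sym2 A) → Prop)
    (hCovers : ∀ F', Covers F' ↔
        ∀ N, IsStronglyStable acc rk N → REquiv rk M N → Q ⊆ N → ∃ e ∈ F', e ∈ N)
    (F : Finset (Sym2 A)) (hF : Covers F) (hFmin : ∀ F' ⊂ F, ¬ Covers F')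
    (F₁ F₂ : Finset (Sym2 A))
    (hF₁ : ∀ e, e ∈ F₁ ↔ e ∈ F ∧ EG e)
    (hF₂ : ∀ e, e ∈ F₂ ↔ e ∈ F ∧ ¬ EG e) :
    (Covers F₁ ∧ ∀ F' ⊂ F₁, ¬ Covers F') ∨ (Covers F₂ ∧ ∀ F' ⊂ F₂, ¬ Covers F') := by
  classical
  have cMM : IsCompleteM M := hcomplete M hM
  have cM'c : IsCompleteM M' := hcomplete M' hM'
  have hsub₁ : F₁ ⊆ F := fun e he => ((hF₁ e).1 he).1
  have hsub₂ : F₂ ⊆ F := fun e he => ((hF₂ e).1 he).1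
  have crossN : ∀ (X : Finset (Sym2 A)), IsStronglyStable acc rk X → REquiv rk M X →
      ∀ x y, s(x, y) ∈ X → (x ∈ Atil ↔ y ∈ Atil) := by
    intro X hXs hXe x y hxy
    constructor
    · intro hxA
      rw [hAtil] at hxA ⊢
      exact cross_lemma acc rk M M' X hM hM' hXs cMM cM'c (hcomplete X hXs) hXe x y hxy hxA
    · intro hyA
      rw [hAtil] at hyA ⊢
      exact cross_lemma acc rk M M' X hM hM' hXs cMM cM'c (hcomplete X hXs) hXe y x
        (sym2_mem_swap hxy) hyA
  have main : Covers F₁ ∨ Covers F₂ := by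
    by_contra hcon
    push_neg at hcon
    obtain ⟨hc1, hc2⟩ := hcon
    rw [hCovers] at hc1 hc2
    push_neg at hc1 hc2
    obtain ⟨N₁, hN₁s, hN₁e, hN₁q, hN₁f⟩ := hc1
    obtain ⟨N₂, hN₂s, hN₂e, hN₂q, hN₂f⟩ := hc2
    have cN₁ := hcomplete N₁ hN₁s
    have cN₂ := hcomplete N₂ hN₂s
    set P : Sym2 A → Prop := fun e => ∀ x ∈ e, x ∈ Atil with hPdef
    have hP : ∀ x y : A, P s(x, y) ↔ (x ∈ Atil ∧ y ∈ Atil) := by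
      intro x y
      constructor
      · intro h
        exact ⟨h x (Sym2.mem_mk_left x y), h y (Sym2.mem_mk_right x y)⟩
      · rintro ⟨h1, h2⟩ z hz
        rcases Sym2.mem_iff.1 hz with rfl | rfl
        exacts [h1, h2]
    set N : Finset (Sym2 A) := N₁.filter P ∪ N₂.filter (fun e => ¬ P e) with hNdef
    have memN : ∀ e, e ∈ N ↔ (e ∈ N₁ ∧ P e) ∨ (e ∈ N₂ ∧ ¬ P e) := by
      intro e
      simp [hNdef, Finset.mem_union, Finset.mem_filter]
    have cN : IsCompleteM N := by
      intro x
      by_cases hx : x ∈ Atil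
      · obtain ⟨y, hy⟩ := cN₁ x
        exact ⟨y, (memN _).2 (Or.inl ⟨hy, (hP x y).2 ⟨hx, (crossN N₁ hN₁s hN₁e x y hy).1 hx⟩⟩)⟩
      · obtain ⟨y, hy⟩ := cN₂ x
        exact ⟨y, (memN _).2 (Or.inr ⟨hy, fun hPe => hx ((hP x y).1 hPe).1⟩)⟩
    have hNmatch : IsSRMatching acc N := by
      constructor
      · intro x y hxy
        rcases (memN _).1 hxy with ⟨h, _⟩ | ⟨h, _⟩
        exacts [hN₁s.1.1 x y h, hN₂s.1.1 x y h]
      · intro x y z h1 h2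
        rcases (memN _).1 h1 with ⟨h1m, h1p⟩ | ⟨h1m, h1p⟩ <;>
          rcases (memN _).1 h2 with ⟨h2m, h2p⟩ | ⟨h2m, h2p⟩
        · exact hN₁s.1.2 x y z h1m h2m
        · exact absurd ((hP x z).2 ⟨((hP x y).1 h1p).1,
            (crossN N₂ hN₂s hN₂e x z h2m).1 ((hP x y).1 h1p).1⟩) h2p
        · exact absurd ((hP x y).2 ⟨((hP x z).1 h2p).1,
            (crossN N₂ hN₂s hN₂e x y h1m).1 ((hP x z).1 h2p).1⟩) h1p
        · exact hN₂s.1.2 x y z h1m h2m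
    have hNe : REquiv rk M N := by
      intro x y z hMy hNz
      rcases (memN _).1 hNz with ⟨h, _⟩ | ⟨h, _⟩
      exacts [hN₁e x y z hMy h, hN₂e x y z hMy h]
    have rkTrans : ∀ x c c₁ : A, s(x, c) ∈ N → s(x, c₁) ∈ N₁ → rk x c = rk x c₁ := by
      intro x c c₁ hc hc₁
      obtain ⟨mx, hmx⟩ := cMM x
      have h1 := hNe x mx c hmx hc
      have h2 := hN₁e x mx c₁ hmx hc₁
      omega
    have hNstable : IsStronglyStable acc rk N := by
      refine ⟨hNmatch, ?_⟩
      rintro x y ⟨hacc, hbl⟩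
      have conv : ∀ u v : A, StPref rk N u v → StPref rk N₁ u v := by
        intro u v h
        rcases h with h | ⟨c, hc, hlt⟩
        · exact absurd (cN u) h
        · obtain ⟨c₁, hc₁⟩ := cN₁ u
          exact Or.inr ⟨c₁, hc₁, by rw [← rkTrans u c c₁ hc hc₁]; exact hlt⟩
      have convW : ∀ u v : A, WkPref rk N u v → WkPref rk N₁ u v := by
        intro u v h
        rcases h with h | ⟨c, hc, hle⟩
        · exact absurd (cN u) h
        · obtain ⟨c₁, hc₁⟩ := cN₁ u
          exact Or.inr ⟨c₁, hc₁, by rw [← rkTrans u c c₁ hc hc₁]; exact hle⟩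
      apply hN₁s.2 x y
      refine ⟨hacc, ?_⟩
      rcases hbl with ⟨h1, h2⟩ | ⟨h1, h2⟩
      exacts [Or.inl ⟨conv _ _ h1, convW _ _ h2⟩, Or.inr ⟨convW _ _ h1, conv _ _ h2⟩]
    have hQN : Q ⊆ N := by
      intro e he
      by_cases hPe : P e
      · exact (memN e).2 (Or.inl ⟨hN₁q he, hPe⟩)
      · exact (memN e).2 (Or.inr ⟨hN₂q he, hPe⟩)
    obtain ⟨e, heF, heN⟩ := (hCovers F).1 hF N hNstable hNe hQN
    have hrep : ∀ z : Sym2 A, ∃ x y : A, z = s(x, y) :=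
      fun z => Sym2.ind (fun x y => ⟨x, y, rfl⟩) z
    obtain ⟨x, y, rfl⟩ := hrep e
    rcases (memN _).1 heN with ⟨heN₁, hPe⟩ | ⟨heN₂, hPe⟩
    · have hEGe : EG s(x, y) := by
        rw [hEG]
        refine ⟨x, y, rfl, ((hP x y).1 hPe).1, ((hP x y).1 hPe).2, hN₁s.1.1 x y heN₁, ?_, ?_⟩
        · intro c hc
          exact (hN₁e x c y hc heN₁).symm
        · intro c hc
          exact (hN₁e y c x hc (sym2_mem_swap heN₁)).symm
      exact hN₁f s(x, y) ((hF₁ _).2 ⟨heF, hEGe⟩) heN₁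
    · have hnEG : ¬ EG s(x, y) := by
        intro hEGe
        obtain ⟨u, v, heq, hu, hv, -, -, -⟩ := (hEG _).1 hEGe
        apply hPe
        intro z hz
        rw [heq] at hz
        rcases Sym2.mem_iff.1 hz with rfl | rfl
        exacts [hu, hv]
      exact hN₂f s(x, y) ((hF₂ _).2 ⟨heF, hnEG⟩) heN₂
  rcases main with h | h
  · left
    have heq : F₁ = F := by
      by_contra hne
      exact hFmin F₁ (lt_of_le_of_ne hsub₁ hne) h
    exact ⟨h, heq ▸ hFmin⟩
  · right
    have heq : F₂ = F := by
      by_contra hne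
      exact hFmin F₂ (lt_of_le_of_ne hsub₂ hne) h
    exact ⟨h, heq ▸ hFmin⟩
end
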